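/- arXiv:2303.08785 — 4 statements merged into one kernel-verified Lean document; each statement's English description precedes it below -/
import Mathlib

section
/- Let g : ℝⁿ → (−∞, ∞] be a proper, lower semicontinuous, convex function, let λ > 0 and μ > 2, and let {x^k}, {p^k} ⊂ ℝⁿ and positive reals {ε_k} satisfy, for all k: ‖p^k − Prox_{λg}(x^k)‖ ≤ λ ε_{k+1}, ‖x^k − p^k‖ > λ μ ε_{k+1}, and x^{k+1} = p^k, where for each k the point x^k is not a minimizer of g. If x̄ is an accumulation point of {x^k} and the Moreau envelope e_λg satisfies the KL property at x̄, then x^k → x̄ as k → ∞. -/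
open Filter Topology MeasureTheory InnerProductSpace

variable {n : ℕ}

local notation "E" => EuclideanSpace ℝ (Fin n)

lemma prox_val (g : E → EReal) (hnebot : ∀ z, g z ≠ ⊥) (lam : ℝ)
    (prox : E → E)
    (hprox : ∀ z y : E,
      g (prox z) + ((1 / (2 * lam) * ‖prox z - z‖ ^ 2 : ℝ) : EReal) ≤
        g y + ((1 / (2 * lam) * ‖y - z‖ ^ 2 : ℝ) : EReal))
    (eg : E → ℝ)
    (heg : ∀ z, (eg z : EReal) =
      ⨅ y, (g y + ((1 / (2 * lam) * ‖y - z‖ ^ 2 : ℝ) : EReal))) (z : E) :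
    g (prox z) = ((eg z - 1 / (2 * lam) * ‖prox z - z‖ ^ 2 : ℝ) : EReal) := by
  have h1 : (eg z : EReal) = g (prox z) + ((1 / (2 * lam) * ‖prox z - z‖ ^ 2 : ℝ) : EReal) := by
    refine le_antisymm ?_ ?_
    · rw [heg z]; exact iInf_le _ (prox z)
    · rw [heg z]; exact le_iInf fun y => hprox z y
  have htop : g (prox z) ≠ ⊤ := by
    intro h
    rw [h, EReal.top_add_coe] at h1
    exact (EReal.coe_ne_top _) h1
  have := EReal.coe_toReal htop (hnebot (prox z))
  rw [← this, ← EReal.coe_add] at h1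
  rw [← this]
  norm_cast
  have := EReal.coe_eq_coe_iff.1 h1
  linarith

lemma key_ineq (g : E → EReal) (hnebot : ∀ z, g z ≠ ⊥) (lam : ℝ)
    (prox : E → E)
    (hprox : ∀ z y : E,
      g (prox z) + ((1 / (2 * lam) * ‖prox z - z‖ ^ 2 : ℝ) : EReal) ≤
        g y + ((1 / (2 * lam) * ‖y - z‖ ^ 2 : ℝ) : EReal))
    (eg : E → ℝ)
    (heg : ∀ z, (eg z : EReal) =
      ⨅ y, (g y + ((1 / (2 * lam) * ‖y - z‖ ^ 2 : ℝ) : EReal))) (z w : E) :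
    eg w ≤ eg z - 1 / (2 * lam) * ‖prox z - z‖ ^ 2 + 1 / (2 * lam) * ‖prox z - w‖ ^ 2 := by
  have h1 : (eg w : EReal) ≤ g (prox z) + ((1 / (2 * lam) * ‖prox z - w‖ ^ 2 : ℝ) : EReal) := by
    rw [heg w]; exact iInf_le _ (prox z)
  rw [prox_val g hnebot lam prox hprox eg heg z, ← EReal.coe_add] at h1
  have := EReal.coe_le_coe_iff.1 h1
  linarith


-- subgradient-type inequality at prox points
lemma prox_subgrad (g : E → EReal) (hnebot : ∀ z, g z ≠ ⊥)
    (hconv : ∀ u v : E, ∀ t : ℝ, 0 ≤ t → t ≤ 1 →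
      g (t • u + (1 - t) • v) ≤ (t : EReal) * g u + ((1 - t : ℝ) : EReal) * g v)
    (lam : ℝ) (hlam : 0 < lam)
    (prox : E → E)
    (hprox : ∀ z y : E,
      g (prox z) + ((1 / (2 * lam) * ‖prox z - z‖ ^ 2 : ℝ) : EReal) ≤
        g y + ((1 / (2 * lam) * ‖y - z‖ ^ 2 : ℝ) : EReal))
    (z w : E) (gu gu' : ℝ) (hgu : g (prox z) = (gu : EReal)) (hgu' : g (prox w) = (gu' : EReal)) :
    gu ≤ gu' + (1 / lam) * ⟪prox z - z, prox w - prox z⟫_ℝ := by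
  set u := prox z with hu
  set u' := prox w with hu'
  have key : ∀ t : ℝ, 0 < t → t ≤ 1 →
      gu ≤ gu' + (1 / lam) * ⟪u - z, u' - u⟫_ℝ + (t / (2 * lam)) * ‖u' - u‖ ^ 2 := by
    intro t ht0 ht1
    set y := t • u' + (1 - t) • u with hy
    have hconvy : g y ≤ ((t * gu' + (1 - t) * gu : ℝ) : EReal) := by
      calc g y ≤ (t : EReal) * g u' + ((1 - t : ℝ) : EReal) * g u := hconv u' u t ht0.le ht1
      _ = ((t * gu' + (1 - t) * gu : ℝ) : EReal) := by
          rw [hgu, hgu', ← EReal.coe_mul, ← EReal.coe_mul, ← EReal.coe_add]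
    have hytop : g y ≠ ⊤ := fun h => by
      rw [h] at hconvy; exact (EReal.coe_ne_top _) (top_le_iff.1 hconvy)
    set gy := (g y).toReal with hgy
    have hgyc : g y = (gy : EReal) := (EReal.coe_toReal hytop (hnebot y)).symm
    have hconvy' : gy ≤ t * gu' + (1 - t) * gu := by
      rw [hgyc] at hconvy; exact EReal.coe_le_coe_iff.1 hconvy
    have hopt : gu + 1 / (2 * lam) * ‖u - z‖ ^ 2 ≤ gy + 1 / (2 * lam) * ‖y - z‖ ^ 2 := by
      have := hprox z y
      rw [← hu, hgu, hgyc, ← EReal.coe_add, ← EReal.coe_add] at this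
      exact EReal.coe_le_coe_iff.1 this
    have hexp : ‖y - z‖ ^ 2 = ‖u - z‖ ^ 2 + 2 * (t * ⟪u - z, u' - u⟫_ℝ) + t ^ 2 * ‖u' - u‖ ^ 2 := by
      have h1 : y - z = (u - z) + t • (u' - u) := by rw [hy]; module
      rw [h1, norm_add_sq_real, real_inner_smul_right, norm_smul]
      rw [Real.norm_eq_abs, abs_of_pos ht0]
      ring
    have hmain : t * gu ≤ t * (gu' + (1 / lam) * ⟪u - z, u' - u⟫_ℝ + (t / (2 * lam)) * ‖u' - u‖ ^ 2) := by
      rw [hexp] at hopt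
      have hl : (0:ℝ) < 2 * lam := by linarith
      have h2 : 1 / (2 * lam) * (2 * (t * ⟪u - z, u' - u⟫_ℝ) + t ^ 2 * ‖u' - u‖ ^ 2)
          = t * ((1 / lam) * ⟪u - z, u' - u⟫_ℝ + (t / (2 * lam)) * ‖u' - u‖ ^ 2) := by
        field_simp
      nlinarith [hopt, hconvy']
    exact le_of_mul_le_mul_left (by linarith [hmain]) ht0
  refine le_of_forall_pos_le_add fun ε hε => ?_
  set B := ‖u' - u‖ ^ 2 with hB
  have hBnn : 0 ≤ B := sq_nonneg _
  set t := min 1 (ε * (2 * lam) / (B + 1)) with ht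
  have ht0 : 0 < t := lt_min one_pos (by positivity)
  have ht1 : t ≤ 1 := min_le_left _ _
  have h := key t ht0 ht1
  have hsmall : (t / (2 * lam)) * B ≤ ε := by
    have h1 : t ≤ ε * (2 * lam) / (B + 1) := min_le_right _ _
    rw [div_mul_eq_mul_div, div_le_iff₀ (by linarith)]
    calc t * B ≤ (ε * (2 * lam) / (B + 1)) * B := by nlinarith
    _ ≤ ε * (2 * lam) := by
        rw [div_mul_eq_mul_div, div_le_iff₀ (by linarith)]
        nlinarith
  linarith

lemma prox_nonexpansive (g : E → EReal) (hnebot : ∀ z, g z ≠ ⊥)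
    (hconv : ∀ u v : E, ∀ t : ℝ, 0 ≤ t → t ≤ 1 →
      g (t • u + (1 - t) • v) ≤ (t : EReal) * g u + ((1 - t : ℝ) : EReal) * g v)
    (lam : ℝ) (hlam : 0 < lam)
    (prox : E → E)
    (hprox : ∀ z y : E,
      g (prox z) + ((1 / (2 * lam) * ‖prox z - z‖ ^ 2 : ℝ) : EReal) ≤
        g y + ((1 / (2 * lam) * ‖y - z‖ ^ 2 : ℝ) : EReal))
    (eg : E → ℝ)
    (heg : ∀ z, (eg z : EReal) =
      ⨅ y, (g y + ((1 / (2 * lam) * ‖y - z‖ ^ 2 : ℝ) : EReal))) (z w : E) :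
    ‖prox w - prox z‖ ≤ ‖w - z‖ := by
  set u := prox z with hu
  set u' := prox w with hu'
  have hgu := prox_val g hnebot lam prox hprox eg heg z
  have hgu' := prox_val g hnebot lam prox hprox eg heg w
  have h1 := prox_subgrad g hnebot hconv lam hlam prox hprox z w _ _ hgu hgu'
  have h2 := prox_subgrad g hnebot hconv lam hlam prox hprox w z _ _ hgu' hgu
  have hl : (0:ℝ) < 1 / lam := by positivity
  have hsum : 0 ≤ ⟪u - z, u' - u⟫_ℝ + ⟪u' - w, u - u'⟫_ℝ := by nlinarith [h1, h2]
  have e1 : ⟪u' - w, u - u'⟫_ℝ = ⟪w - u', u' - u⟫_ℝ := by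
    rw [← inner_neg_neg (𝕜 := ℝ)]
    congr 1 <;> abel
  have e2 : (u - z) + (w - u') = (w - z) - (u' - u) := by abel
  have hid : ⟪u - z, u' - u⟫_ℝ + ⟪u' - w, u - u'⟫_ℝ = ⟪w - z, u' - u⟫_ℝ - ‖u' - u‖ ^ 2 := by
    rw [e1, ← inner_add_left, e2, inner_sub_left, real_inner_self_eq_norm_sq]
  have h3 : ‖u' - u‖ ^ 2 ≤ ⟪w - z, u' - u⟫_ℝ := by linarith [hsum, hid]
  have h4 := real_inner_le_norm (w - z) (u' - u)
  nlinarith [norm_nonneg (u' - u), norm_nonneg (w - z)]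
-- upper smoothness bound
lemma eg_upper (g : E → EReal) (hnebot : ∀ z, g z ≠ ⊥) (lam : ℝ) (hlam : 0 < lam)
    (prox : E → E)
    (hprox : ∀ z y : E,
      g (prox z) + ((1 / (2 * lam) * ‖prox z - z‖ ^ 2 : ℝ) : EReal) ≤
        g y + ((1 / (2 * lam) * ‖y - z‖ ^ 2 : ℝ) : EReal))
    (eg : E → ℝ)
    (heg : ∀ z, (eg z : EReal) =
      ⨅ y, (g y + ((1 / (2 * lam) * ‖y - z‖ ^ 2 : ℝ) : EReal))) (z w : E) :
    eg w - eg z ≤ ⟪lam⁻¹ • (z - prox z), w - z⟫_ℝ + 1 / (2 * lam) * ‖w - z‖ ^ 2 := by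
  have h := key_ineq g hnebot lam prox hprox eg heg z w
  have hexp : ‖prox z - w‖ ^ 2
      = ‖prox z - z‖ ^ 2 - 2 * ⟪prox z - z, w - z⟫_ℝ + ‖w - z‖ ^ 2 := by
    have h1 : prox z - w = (prox z - z) - (w - z) := by abel
    rw [h1, norm_sub_sq_real]
  have hinner : ⟪lam⁻¹ • (z - prox z), w - z⟫_ℝ = lam⁻¹ * ⟪z - prox z, w - z⟫_ℝ :=
    real_inner_smul_left _ _ _
  have hneg : ⟪z - prox z, w - z⟫_ℝ = -⟪prox z - z, w - z⟫_ℝ := by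
    rw [show z - prox z = -(prox z - z) by abel, inner_neg_left]
  rw [hinner, hneg]
  rw [hexp] at h
  have hl : lam ≠ 0 := ne_of_gt hlam
  have hr : eg z - 1 / (2 * lam) * ‖prox z - z‖ ^ 2 + 1 / (2 * lam) *
      (‖prox z - z‖ ^ 2 - 2 * ⟪prox z - z, w - z⟫_ℝ + ‖w - z‖ ^ 2)
      = eg z + lam⁻¹ * -⟪prox z - z, w - z⟫_ℝ + 1 / (2 * lam) * ‖w - z‖ ^ 2 := by
    field_simp
    ring
  rw [hr] at h
  linarith

lemma eg_hasGradient (g : E → EReal) (hnebot : ∀ z, g z ≠ ⊥)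
    (hconv : ∀ u v : E, ∀ t : ℝ, 0 ≤ t → t ≤ 1 →
      g (t • u + (1 - t) • v) ≤ (t : EReal) * g u + ((1 - t : ℝ) : EReal) * g v)
    (lam : ℝ) (hlam : 0 < lam)
    (prox : E → E)
    (hprox : ∀ z y : E,
      g (prox z) + ((1 / (2 * lam) * ‖prox z - z‖ ^ 2 : ℝ) : EReal) ≤
        g y + ((1 / (2 * lam) * ‖y - z‖ ^ 2 : ℝ) : EReal))
    (eg : E → ℝ)
    (heg : ∀ z, (eg z : EReal) =
      ⨅ y, (g y + ((1 / (2 * lam) * ‖y - z‖ ^ 2 : ℝ) : EReal))) (z : E) :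
    HasGradientAt eg (lam⁻¹ • (z - prox z)) z := by
  set v : E → E := fun y => lam⁻¹ • (y - prox y) with hv
  have hkey : ∀ w : E, |eg w - eg z - ⟪v z, w - z⟫_ℝ| ≤ 5 / (2 * lam) * ‖w - z‖ ^ 2 := by
    intro w
    have hup := eg_upper g hnebot lam hlam prox hprox eg heg z w
    have hlow := eg_upper g hnebot lam hlam prox hprox eg heg w z
    -- hlow : eg z - eg w ≤ ⟪v w, z - w⟫ + 1/(2 lam) ‖z - w‖²
    have hnz : ‖z - w‖ = ‖w - z‖ := norm_sub_rev _ _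
    have hvd : ‖v w - v z‖ ≤ 2 / lam * ‖w - z‖ := by
      have h1 : v w - v z = lam⁻¹ • ((w - prox w) - (z - prox z)) := by
        rw [hv]; simp [smul_sub]
      rw [h1, norm_smul, Real.norm_eq_abs, abs_of_pos (by positivity : (0:ℝ) < lam⁻¹)]
      have h2 : (w - prox w) - (z - prox z) = (w - z) - (prox w - prox z) := by abel
      rw [h2]
      have h3 : ‖(w - z) - (prox w - prox z)‖ ≤ ‖w - z‖ + ‖prox w - prox z‖ :=
        norm_sub_le _ _
      have h4 := prox_nonexpansive g hnebot hconv lam hlam prox hprox eg heg z w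
      have h5 : ‖(w - z) - (prox w - prox z)‖ ≤ 2 * ‖w - z‖ := by linarith
      calc lam⁻¹ * ‖(w - z) - (prox w - prox z)‖ ≤ lam⁻¹ * (2 * ‖w - z‖) :=
            mul_le_mul_of_nonneg_left h5 (by positivity)
      _ = 2 / lam * ‖w - z‖ := by field_simp
    have hinn : ⟪v w, z - w⟫_ℝ = -⟪v w, w - z⟫_ℝ := by
      rw [show z - w = -(w - z) by abel, inner_neg_right]
    have hsplit : ⟪v w, w - z⟫_ℝ - ⟪v z, w - z⟫_ℝ = ⟪v w - v z, w - z⟫_ℝ := by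
      rw [inner_sub_left]
    have habs : |⟪v w - v z, w - z⟫_ℝ| ≤ 2 / lam * ‖w - z‖ ^ 2 := by
      have := abs_real_inner_le_norm (v w - v z) (w - z)
      calc |⟪v w - v z, w - z⟫_ℝ| ≤ ‖v w - v z‖ * ‖w - z‖ := this
      _ ≤ (2 / lam * ‖w - z‖) * ‖w - z‖ := by
          exact mul_le_mul_of_nonneg_right hvd (norm_nonneg _)
      _ = 2 / lam * ‖w - z‖ ^ 2 := by ring
    rw [abs_le]
    constructor
    · -- lower bound
      have : eg w - eg z ≥ ⟪v w, w - z⟫_ℝ - 1 / (2 * lam) * ‖w - z‖ ^ 2 := by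
        rw [hnz] at hlow; rw [hinn] at hlow; linarith
      have h5 : eg w - eg z - ⟪v z, w - z⟫_ℝ ≥ ⟪v w - v z, w - z⟫_ℝ
          - 1 / (2 * lam) * ‖w - z‖ ^ 2 := by rw [← hsplit]; linarith
      have h6 : ⟪v w - v z, w - z⟫_ℝ ≥ -(2 / lam * ‖w - z‖ ^ 2) := by
        rcases abs_le.1 habs with ⟨h, _⟩; linarith
      have h7 : 2 / lam * ‖w - z‖ ^ 2 + 1 / (2 * lam) * ‖w - z‖ ^ 2
          = 5 / (2 * lam) * ‖w - z‖ ^ 2 := by field_simp; ring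
      linarith
    · have hc : (1:ℝ) / (2 * lam) ≤ 5 / (2 * lam) :=
        (div_le_div_iff_of_pos_right (by linarith : (0:ℝ) < 2 * lam)).2 (by norm_num)
      have h8 : 1 / (2 * lam) * ‖w - z‖ ^ 2 ≤ 5 / (2 * lam) * ‖w - z‖ ^ 2 :=
        mul_le_mul_of_nonneg_right hc (sq_nonneg _)
      linarith [hup]
  rw [hasGradientAt_iff_hasFDerivAt]
  rw [hasFDerivAt_iff_isLittleO_nhds_zero]
  rw [Asymptotics.isLittleO_iff]
  intro C hC
  have hδ : (0:ℝ) < C * (2 * lam) / 5 := by positivity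
  filter_upwards [Metric.ball_mem_nhds (0:E) hδ] with h hh
  rw [mem_ball_zero_iff] at hh
  have := hkey (z + h)
  simp only [add_sub_cancel_left] at this
  have htd : (InnerProductSpace.toDual ℝ E) (v z) h = ⟪v z, h⟫_ℝ := rfl
  rw [Real.norm_eq_abs, htd]
  calc |eg (z + h) - eg z - ⟪v z, h⟫_ℝ| ≤ 5 / (2 * lam) * ‖h‖ ^ 2 := this
  _ = (5 / (2 * lam) * ‖h‖) * ‖h‖ := by ring
  _ ≤ C * ‖h‖ := by
      apply mul_le_mul_of_nonneg_right _ (norm_nonneg _)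
      rw [div_mul_eq_mul_div, div_le_iff₀ (by linarith : (0:ℝ) < 2 * lam)]
      calc 5 * ‖h‖ ≤ 5 * (C * (2 * lam) / 5) := by linarith
      _ = C * (2 * lam) := by ring
-- Φ machinery
lemma Phi_lower (η : ℝ) (ψ : ℝ → ℝ) (hψmono : MonotoneOn ψ (Set.Ioo 0 η))
    (hψpos : ∀ t ∈ Set.Ioo (0:ℝ) η, 0 < ψ t)
    (hψint : IntegrableOn (fun t => 1 / ψ t) (Set.Ioo 0 η))
    (b aa : ℝ) (hb : 0 < b) (hba : b ≤ aa) (haη : aa < η) :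
    (∫ t in Set.Ioc 0 b, 1 / ψ t ∂(volume.restrict (Set.Ioo 0 η))) + (aa - b) * (1 / ψ aa)
      ≤ ∫ t in Set.Ioc 0 aa, 1 / ψ t ∂(volume.restrict (Set.Ioo 0 η)) := by
  set ν := volume.restrict (Set.Ioo 0 η) with hν
  have hint : Integrable (fun t => 1 / ψ t) ν := hψint
  have hsub : Set.Ioc b aa ⊆ Set.Ioo 0 η := fun t ht => ⟨lt_of_lt_of_le hb ht.1.le, lt_of_le_of_lt ht.2 haη⟩
  have hunion : Set.Ioc (0:ℝ) aa = Set.Ioc 0 b ∪ Set.Ioc b aa :=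
    (Set.Ioc_union_Ioc_eq_Ioc hb.le hba).symm
  have hdisj : Disjoint (Set.Ioc (0:ℝ) b) (Set.Ioc b aa) := Set.Ioc_disjoint_Ioc_of_le le_rfl
  rw [hunion, setIntegral_union hdisj measurableSet_Ioc hint.integrableOn hint.integrableOn]
  have hmeas : ν (Set.Ioc b aa) = ENNReal.ofReal (aa - b) := by
    rw [hν, Measure.restrict_apply measurableSet_Ioc,
      Set.inter_eq_self_of_subset_left hsub, Real.volume_Ioc]
  have haa : aa ∈ Set.Ioo (0:ℝ) η := ⟨lt_of_lt_of_le hb hba, haη⟩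
  have hconst : ∫ _ in Set.Ioc b aa, (1 / ψ aa) ∂ν = (aa - b) * (1 / ψ aa) := by
    rw [setIntegral_const, measureReal_def, hmeas, ENNReal.toReal_ofReal (by linarith), smul_eq_mul]
  have hmono' : ∀ t ∈ Set.Ioc b aa, 1 / ψ aa ≤ 1 / ψ t := by
    intro t ht
    have htm : t ∈ Set.Ioo (0:ℝ) η := hsub ht
    exact one_div_le_one_div_of_le (hψpos t htm) (hψmono htm haa ht.2)
  have hcle : IntegrableOn (fun _ => 1 / ψ aa) (Set.Ioc b aa) ν := by
    rw [integrableOn_const_iff]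
    exact Or.inr (by rw [hmeas]; exact ENNReal.ofReal_lt_top)
  have := setIntegral_mono_on hcle hint.integrableOn measurableSet_Ioc hmono'
  rw [hconst] at this
  linarith

lemma Phi_nonneg (η : ℝ) (ψ : ℝ → ℝ)
    (hψpos : ∀ t ∈ Set.Ioo (0:ℝ) η, 0 < ψ t) (s : ℝ) (hs : s < η) :
    0 ≤ ∫ t in Set.Ioc 0 s, 1 / ψ t ∂(volume.restrict (Set.Ioo 0 η)) := by
  refine setIntegral_nonneg measurableSet_Ioc fun t ht => ?_
  have hp := hψpos t ⟨ht.1, lt_of_le_of_lt ht.2 hs⟩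
  positivity

lemma Phi_tendsto (η : ℝ) (ψ : ℝ → ℝ)
    (hψint : IntegrableOn (fun t => 1 / ψ t) (Set.Ioo 0 η))
    (A : ℕ → ℝ) (hA : Tendsto A atTop (𝓝 0)) :
    Tendsto (fun j => ∫ t in Set.Ioc 0 (A j), 1 / ψ t ∂(volume.restrict (Set.Ioo 0 η)))
      atTop (𝓝 0) := by
  set ν := volume.restrict (Set.Ioo 0 η) with hν
  have hint : Integrable (fun t => 1 / ψ t) ν := hψint
  set F : ℕ → ℝ → ℝ := fun j => (Set.Ioc 0 (A j)).indicator (fun t => 1 / ψ t) with hF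
  have hFint : ∀ j, ∫ t, F j t ∂ν = ∫ t in Set.Ioc 0 (A j), 1 / ψ t ∂ν := fun j =>
    integral_indicator measurableSet_Ioc
  have hDCT : Tendsto (fun j => ∫ t, F j t ∂ν) atTop (𝓝 (∫ _, (0:ℝ) ∂ν)) := by
    apply tendsto_integral_of_dominated_convergence (fun t => ‖1 / ψ t‖)
    · exact fun j => hint.aestronglyMeasurable.indicator measurableSet_Ioc
    · exact hint.norm
    · exact fun j => Filter.Eventually.of_forall fun t => norm_indicator_le_norm_self _ _
    · refine Filter.Eventually.of_forall fun t => ?_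
      rcases le_or_gt t 0 with ht | ht
      · have : ∀ j, F j t = 0 := fun j =>
          Set.indicator_of_notMem (fun hmem => absurd hmem.1 (not_lt.2 ht)) _
        simp only [this]
        exact tendsto_const_nhds
      · have hev : ∀ᶠ j in atTop, F j t = 0 := by
          filter_upwards [hA.eventually (eventually_lt_nhds ht)] with j hj
          exact Set.indicator_of_notMem (fun hmem => absurd hmem.2 (not_le.2 hj)) _
        exact Tendsto.congr' (Filter.EventuallyEq.symm hev) tendsto_const_nhds
  rw [integral_zero] at hDCT
  exact hDCT.congr hFint

/-- GIPPM: global convergence of the iterates when the Moreau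
envelope e_λg satisfies the KL property at an accumulation point. -/
theorem GIPPM_convergence_under_KL {n : ℕ}
    (g : EuclideanSpace ℝ (Fin n) → EReal)
    (hproper : ∃ z, g z ≠ ⊤) (hnebot : ∀ z, g z ≠ ⊥)
    (hlsc : LowerSemicontinuous g)
    (hconv : ∀ u v : EuclideanSpace ℝ (Fin n), ∀ t : ℝ, 0 ≤ t → t ≤ 1 →
      g (t • u + (1 - t) • v) ≤ (t : EReal) * g u + ((1 - t : ℝ) : EReal) * g v)
    (lam μ : ℝ) (hlam : 0 < lam) (hμ : 2 < μ)
    (prox : EuclideanSpace ℝ (Fin n) → EuclideanSpace ℝ (Fin n))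
    (hprox : ∀ z y : EuclideanSpace ℝ (Fin n),
      g (prox z) + ((1 / (2 * lam) * ‖prox z - z‖ ^ 2 : ℝ) : EReal) ≤
        g y + ((1 / (2 * lam) * ‖y - z‖ ^ 2 : ℝ) : EReal))
    (eg : EuclideanSpace ℝ (Fin n) → ℝ)
    (heg : ∀ z, (eg z : EReal) =
      ⨅ y, (g y + ((1 / (2 * lam) * ‖y - z‖ ^ 2 : ℝ) : EReal)))
    (x p : ℕ → EuclideanSpace ℝ (Fin n)) (ε : ℕ → ℝ) (hε : ∀ k : ℕ, 0 < ε k)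
    (herr : ∀ k : ℕ, ‖p k - prox (x k)‖ ≤ lam * ε (k + 1))
    (hbig : ∀ k : ℕ, lam * μ * ε (k + 1) < ‖x k - p k‖)
    (hiter : ∀ k : ℕ, x (k + 1) = p k)
    (hnotmin : ∀ k : ℕ, ∃ y, g y < g (x k))
    (xbar : EuclideanSpace ℝ (Fin n))
    (hacc : ∃ φ : ℕ → ℕ, StrictMono φ ∧ Tendsto (fun k => x (φ k)) atTop (𝓝 xbar))
    (hKL : ∃ η > (0 : ℝ), ∃ U ∈ 𝓝 xbar, ∃ ψ : ℝ → ℝ,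
      MonotoneOn ψ (Set.Ioo 0 η) ∧ (∀ t ∈ Set.Ioo (0 : ℝ) η, 0 < ψ t) ∧
      IntegrableOn (fun t => 1 / ψ t) (Set.Ioo 0 η) ∧
      ∀ y ∈ U, eg xbar < eg y → eg y < eg xbar + η →
        ψ (eg y - eg xbar) ≤ ‖gradient eg y‖) :
    Tendsto x atTop (𝓝 xbar) := by
  obtain ⟨φ, hφ, hconvx⟩ := hacc
  obtain ⟨η, hη, U, hU, ψ, hψmono, hψpos, hψint, hKLineq⟩ := hKL
  have hgrad : ∀ y, gradient eg y = lam⁻¹ • (y - prox y) := fun y =>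
    (eg_hasGradient g hnebot hconv lam hlam prox hprox eg heg y).gradient
  have hcont : Continuous eg := continuous_iff_continuousAt.2 fun y =>
    (eg_hasGradient g hnebot hconv lam hlam prox hprox eg heg y).differentiableAt.continuousAt
  set s : ℕ → ℝ := fun k => ‖x k - p k‖ with hs
  set a : ℕ → ℝ := fun k => eg (x k) - eg xbar with ha
  have hμ0 : (0:ℝ) < μ := by linarith
  have hspos : ∀ k, 0 < s k := fun k => by
    simp only [hs]
    exact lt_trans (mul_pos (mul_pos hlam (by linarith : (0:ℝ) < μ)) (hε (k+1))) (hbig k)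
  have hepos : ∀ k, 0 < lam * ε (k+1) := fun k => mul_pos hlam (hε (k+1))
  have hes : ∀ k, μ * (lam * ε (k+1)) < s k := fun k => by
    have := hbig k; simp only [hs]; nlinarith [this]
  -- sufficient decrease of the Moreau envelope along iterates
  have hdesc : ∀ k, a (k+1) + (μ-2)/(2*lam*μ) * s k ^ 2 ≤ a k := by
    intro k
    have he : (0:ℝ) < lam * ε (k+1) := mul_pos hlam (hε (k+1))
    have hkey := key_ineq g hnebot lam prox hprox eg heg (x k) (p k)
    have herrk : ‖prox (x k) - p k‖ ≤ lam * ε (k+1) := by rw [norm_sub_rev]; exact herr k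
    have htri : s k ≤ ‖prox (x k) - x k‖ + lam * ε (k+1) := by
      have h1 : x k - p k = (x k - prox (x k)) + (prox (x k) - p k) := by abel
      have h2 : ‖x k - p k‖ ≤ ‖x k - prox (x k)‖ + ‖prox (x k) - p k‖ := by
        rw [h1]; exact norm_add_le _ _
      rw [norm_sub_rev (x k) (prox (x k))] at h2
      simp only [hs]
      linarith
    have hesk := hes k
    have hepk := hepos k
    have h0 : 0 ≤ s k - lam * ε (k+1) := by nlinarith [he]
    have hA : (s k - lam * ε (k+1))^2 ≤ ‖prox (x k) - x k‖^2 := pow_le_pow_left₀ h0 (by linarith) 2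
    have hB : ‖prox (x k) - p k‖^2 ≤ (lam * ε (k+1))^2 := pow_le_pow_left₀ (norm_nonneg _) herrk 2
    have hc : (0:ℝ) < 1/(2*lam) := by positivity
    have h2 : eg (p k) ≤ eg (x k) - 1/(2*lam) * (s k^2 - 2*s k*(lam * ε (k+1))) := by
      nlinarith [hkey, mul_le_mul_of_nonneg_left hA hc.le, mul_le_mul_of_nonneg_left hB hc.le]
    have h3 : (μ-2)/(2*lam*μ) * s k^2 ≤ 1/(2*lam) * (s k^2 - 2*s k*(lam * ε (k+1))) := by
      rw [div_mul_eq_mul_div, div_mul_eq_mul_div, div_le_div_iff₀ (by positivity) (by positivity)]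
      nlinarith [mul_pos (mul_pos hlam (hspos k)) (sub_pos.2 hesk)]
    have h4 := hiter k
    simp only [ha]
    rw [h4]
    linarith
  -- gradient norm bound
  have hgb : ∀ k, ‖gradient eg (x k)‖ ≤ (μ+1)/(lam*μ) * s k := by
    intro k
    rw [hgrad]
    have he : (0:ℝ) < lam * ε (k+1) := mul_pos hlam (hε (k+1))
    have h1 : ‖x k - prox (x k)‖ ≤ s k + lam * ε (k+1) := by
      have hd : x k - prox (x k) = (x k - p k) + (p k - prox (x k)) := by abel
      calc ‖x k - prox (x k)‖ ≤ ‖x k - p k‖ + ‖p k - prox (x k)‖ := by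
            rw [hd]; exact norm_add_le _ _
      _ ≤ s k + lam * ε (k+1) := by simp only [hs]; exact add_le_add le_rfl (herr k)
    rw [norm_smul, Real.norm_eq_abs, abs_of_pos (by positivity : (0:ℝ) < lam⁻¹)]
    have h2 : lam * ε (k+1) ≤ s k / μ := by rw [le_div_iff₀ hμ0]; nlinarith [hes k]
    calc lam⁻¹ * ‖x k - prox (x k)‖ ≤ lam⁻¹ * (s k + s k/μ) := by
          apply mul_le_mul_of_nonneg_left _ (by positivity)
          linarith
    _ = (μ+1)/(lam*μ) * s k := by field_simp
  have hδpos : (0:ℝ) < (μ-2)/(2*lam*μ) := div_pos (by linarith) (by positivity)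
  have hdec : ∀ k, a (k+1) < a k := fun k =>
    lt_of_lt_of_le (lt_add_of_pos_right _ (mul_pos hδpos (pow_pos (hspos k) 2))) (hdesc k)
  have hanti : Antitone a := antitone_nat_of_succ_le fun k => (hdec k).le
  have halim : Tendsto (fun j => a (φ j)) atTop (𝓝 0) := by
    have h1 : Tendsto (fun j => eg (x (φ j))) atTop (𝓝 (eg xbar)) :=
      (hcont.tendsto xbar).comp hconvx
    have h2 := h1.sub_const (eg xbar)
    simp only [sub_self] at h2
    exact h2
  have hapos : ∀ k, 0 < a k := by
    intro k
    by_contra hneg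
    push_neg at hneg
    have h1 : a (k+1) < 0 := lt_of_lt_of_le (hdec k) hneg
    have h2 : ∀ᶠ j in atTop, a (φ j) ≤ a (k+1) := by
      filter_upwards [eventually_ge_atTop (k+1)] with j hj
      exact hanti (le_trans hj (hφ.le_apply))
    have := le_of_tendsto halim h2
    linarith
  set Φ : ℝ → ℝ := fun t => ∫ u in Set.Ioc 0 t, 1 / ψ u ∂(volume.restrict (Set.Ioo 0 η)) with hΦ
  set c : ℝ := (μ-2)/(2*(μ+1)) with hcdef
  have hcpos : 0 < c := div_pos (by linarith) (by linarith)
  -- KL step inequality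
  have hstep : ∀ k, x k ∈ U → a k < η → c * s k ≤ Φ (a k) - Φ (a (k+1)) := by
    intro k hkU hkη
    have hak := hapos k
    have haIoo : a k ∈ Set.Ioo (0:ℝ) η := ⟨hak, hkη⟩
    have hKLk : ψ (a k) ≤ ‖gradient eg (x k)‖ := by
      have h01 : eg xbar < eg (x k) := by
        have := hak; simp only [ha] at this; linarith
      have h02 : eg (x k) < eg xbar + η := by
        have := hkη; simp only [ha] at this; linarith
      have := hKLineq (x k) hkU h01 h02
      simpa [ha] using this
    have hψk := hψpos _ haIoo
    have hψs : ψ (a k) ≤ (μ+1)/(lam*μ) * s k := le_trans hKLk (hgb k)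
    have hgap : (μ-2)/(2*lam*μ) * s k^2 ≤ a k - a (k+1) := by linarith [hdesc k]
    have hlow : Φ (a (k+1)) + (a k - a (k+1)) * (1 / ψ (a k)) ≤ Φ (a k) := by
      simp only [hΦ]
      exact Phi_lower η ψ hψmono hψpos hψint (a (k+1)) (a k) (hapos (k+1)) (hdec k).le hkη
    have hsne : s k ≠ 0 := ne_of_gt (hspos k)
    have hlamne : lam ≠ 0 := ne_of_gt hlam
    have hμne : μ ≠ 0 := ne_of_gt hμ0
    have hμ1ne : μ + 1 ≠ 0 := by linarith
    have h1 : c * s k ≤ (a k - a (k+1)) * (1 / ψ (a k)) := by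
      have e1 : c * s k = ((μ-2)/(2*lam*μ) * s k^2) * (1/((μ+1)/(lam*μ) * s k)) := by
        rw [hcdef]; field_simp
      rw [e1]
      have e2 : 1/((μ+1)/(lam*μ) * s k) ≤ 1/ψ (a k) := one_div_le_one_div_of_le hψk hψs
      have e3 := mul_le_mul_of_nonneg_left e2
        (by positivity : (0:ℝ) ≤ (μ-2)/(2*lam*μ) * s k^2)
      have e4 := mul_le_mul_of_nonneg_right hgap (by positivity : (0:ℝ) ≤ 1/ψ (a k))
      calc ((μ-2)/(2*lam*μ) * s k^2) * (1/((μ+1)/(lam*μ) * s k))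
          ≤ ((μ-2)/(2*lam*μ) * s k^2) * (1/ψ (a k)) := e3
      _ ≤ (a k - a (k+1)) * (1/ψ (a k)) := e4
    linarith
  -- choose base index K
  obtain ⟨r, hr, hball⟩ := Metric.mem_nhds_iff.1 hU
  have hΦlim : Tendsto (fun j => Φ (a (φ j))) atTop (𝓝 0) := by
    simp only [hΦ]
    exact Phi_tendsto η ψ hψint _ halim
  have hev1 : ∀ᶠ j in atTop, ‖x (φ j) - xbar‖ < r/4 := by
    filter_upwards [hconvx.eventually_mem (Metric.ball_mem_nhds xbar (by positivity : (0:ℝ) < r/4))]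
      with j hj
    rwa [Metric.mem_ball, dist_eq_norm] at hj
  have hev2 : ∀ᶠ j in atTop, a (φ j) < η := halim.eventually (eventually_lt_nhds hη)
  have hev3 : ∀ᶠ j in atTop, Φ (a (φ j)) < c * (r/4) :=
    hΦlim.eventually (eventually_lt_nhds (by positivity))
  obtain ⟨j₀, hj1, hj2, hj3⟩ := (hev1.and (hev2.and hev3)).exists
  set K := φ j₀ with hK
  -- telescoping
  have htel : ∀ m, ‖x (K + m) - x K‖ ≤ ∑ i ∈ Finset.range m, s (K + i) := by
    intro m
    induction m with
    | zero => simp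
    | succ m ih =>
      have h1 : x (K + m + 1) = p (K + m) := hiter (K + m)
      have he1 : x (K + (m+1)) - x K = (x (K + m + 1) - x (K + m)) + (x (K + m) - x K) := by
        have : K + (m+1) = K + m + 1 := rfl
        rw [this]; abel
      have h3 : ‖x (K + m + 1) - x (K + m)‖ = s (K + m) := by
        simp only [hs]; rw [h1, norm_sub_rev]
      have h2 : ‖x (K + (m+1)) - x K‖ ≤ s (K + m) + ‖x (K + m) - x K‖ := by
        rw [he1, ← h3]; exact norm_add_le _ _
      rw [Finset.sum_range_succ]
      linarith
  have haη' : ∀ m, a (K + m) < η := fun m =>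
    lt_of_le_of_lt (hanti (Nat.le_add_right K m)) hj2
  have hΦnn : ∀ m, 0 ≤ Φ (a (K+m)) := fun m => by
    simp only [hΦ]; exact Phi_nonneg η ψ hψpos _ (haη' m)
  -- main induction
  have hmain : ∀ m, c * (∑ i ∈ Finset.range m, s (K + i)) ≤ Φ (a K) - Φ (a (K + m)) := by
    intro m
    induction m with
    | zero => simp
    | succ m ih =>
      have hsum_le : ∑ i ∈ Finset.range m, s (K + i) ≤ r/4 := by
        have hn := hΦnn m
        have h4 : c * (∑ i ∈ Finset.range m, s (K + i)) ≤ c * (r/4) := by linarith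
        exact le_of_mul_le_mul_left h4 hcpos
      have hx : x (K + m) ∈ U := by
        apply hball
        rw [Metric.mem_ball, dist_eq_norm]
        have he2 : x (K + m) - xbar = (x (K + m) - x K) + (x K - xbar) := by abel
        have h5 : ‖x (K + m) - xbar‖ ≤ ‖x (K + m) - x K‖ + ‖x K - xbar‖ := by
          rw [he2]; exact norm_add_le _ _
        have h6 := htel m
        linarith [hj1]
      have hst := hstep (K + m) hx (haη' m)
      rw [Finset.sum_range_succ, mul_add]
      have hKm : K + (m+1) = K + m + 1 := rfl
      rw [hKm]
      linarith
  have hsum_all : ∀ m, ∑ i ∈ Finset.range m, s (K + i) ≤ r/4 := by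
    intro m
    have hn := hΦnn m
    have h4 : c * (∑ i ∈ Finset.range m, s (K + i)) ≤ c * (r/4) := by linarith [hmain m]
    exact le_of_mul_le_mul_left h4 hcpos
  have hsummable : Summable (fun i => s (K + i)) :=
    summable_of_sum_range_le (fun i => by simp only [hs]; exact norm_nonneg _) hsum_all
  have hsummable' : Summable s := by
    have hcongr : (fun i => s (K + i)) = fun i => s (i + K) := by
      funext i; rw [Nat.add_comm]
    rw [hcongr] at hsummable
    exact (summable_nat_add_iff K).1 hsummable
  have hcauchy : CauchySeq x := by
    apply cauchySeq_of_dist_le_of_summable s _ hsummable'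
    intro k
    rw [dist_eq_norm]
    have : x (k+1) = p k := hiter k
    rw [Nat.succ_eq_add_one, this]
  obtain ⟨L, hL⟩ := cauchySeq_tendsto_of_complete hcauchy
  have hsub : Tendsto (fun j => x (φ j)) atTop (𝓝 L) := hL.comp hφ.tendsto_atTop
  rw [tendsto_nhds_unique hconvx hsub]
  exact hL
end

section
/- Let g : ℝⁿ → (−∞, ∞] be a proper, lower semicontinuous, convex function, let λ > 0 and μ > 2, and let {x^k}, {p^k} ⊂ ℝⁿ and positive reals {ε_k} satisfy, for all k: ‖p^k − Prox_{λg}(x^k)‖ ≤ λ ε_{k+1}, ‖x^k − p^k‖ > λ μ ε_{k+1}, and x^{k+1} = p^k, where for each k the point x^k is not a minimizer of g. Suppose x̄ is an accumulation point of {x^k} and the Moreau envelope e_λg satisfies the KL property at x̄ with ψ(t) = M t^q for some M > 0 and q ∈ (0,1). Then: if q ∈ (0, 1/2], the sequence {x^k} converges linearly to x̄ (there exist c > 0 and ρ ∈ (0,1) with ‖x^k − x̄‖ ≤ c ρ^k); if q ∈ (1/2, 1), then ‖x^k − x̄‖ = O(k^{−(1−q)/(2q−1)}) as k → ∞. -/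
open Filter Topology

local notation "⟪" x ", " y "⟫" => @inner ℝ _ _ x y

section Aux

variable {n : ℕ} (g : EuclideanSpace ℝ (Fin n) → EReal) (lam : ℝ)
  (prox : EuclideanSpace ℝ (Fin n) → EuclideanSpace ℝ (Fin n))
  (eg : EuclideanSpace ℝ (Fin n) → ℝ)

/-- norm of convex combination -/
lemma norm_combo {E : Type*} [NormedAddCommGroup E] [InnerProductSpace ℝ E]
    (a b : E) (t : ℝ) :
    ‖t • a + (1 - t) • b‖ ^ 2
      = t * ‖a‖ ^ 2 + (1 - t) * ‖b‖ ^ 2 - t * (1 - t) * ‖a - b‖ ^ 2 := by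
  have e1 := norm_add_sq_real (t • a) ((1 - t) • b)
  have e2 := norm_sub_sq_real a b
  have e3 : ⟪t • a, (1 - t) • b⟫ = t * (1 - t) * ⟪a, b⟫ := by
    rw [real_inner_smul_left, real_inner_smul_right]; ring
  have e4 : ‖t • a‖ ^ 2 = t ^ 2 * ‖a‖ ^ 2 := by
    rw [norm_smul]; rw [mul_pow]; rw [Real.norm_eq_abs, sq_abs]
  have e5 : ‖(1 - t) • b‖ ^ 2 = (1 - t) ^ 2 * ‖b‖ ^ 2 := by
    rw [norm_smul]; rw [mul_pow]; rw [Real.norm_eq_abs, sq_abs]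
  rw [e1, e3, e4, e5, e2]; ring

lemma inner_four {E : Type*} [NormedAddCommGroup E] [InnerProductSpace ℝ E]
    (A B z w : E) :
    ‖B - z‖ ^ 2 - ‖B - w‖ ^ 2 + ‖A - w‖ ^ 2 - ‖A - z‖ ^ 2 = 2 * ⟪A - B, z - w⟫ := by
  have e1 := norm_sub_sq_real B z
  have e2 := norm_sub_sq_real B w
  have e3 := norm_sub_sq_real A w
  have e4 := norm_sub_sq_real A z
  have e5 : ⟪A - B, z - w⟫ = ⟪A, z⟫ - ⟪A, w⟫ - ⟪B, z⟫ + ⟪B, w⟫ := by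
    rw [inner_sub_left, inner_sub_right, inner_sub_right]; ring
  rw [e1, e2, e3, e4, e5]; ring

/-- L1 : value of the envelope at the prox point -/
lemma moreau_L1 (hnebot : ∀ z, g z ≠ ⊥)
    (hprox : ∀ z y : EuclideanSpace ℝ (Fin n),
      g (prox z) + ((1 / (2 * lam) * ‖prox z - z‖ ^ 2 : ℝ) : EReal) ≤
        g y + ((1 / (2 * lam) * ‖y - z‖ ^ 2 : ℝ) : EReal))
    (heg : ∀ z, (eg z : EReal) =
      ⨅ y, (g y + ((1 / (2 * lam) * ‖y - z‖ ^ 2 : ℝ) : EReal))) :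
    ∀ z, g (prox z) = ((eg z - 1 / (2 * lam) * ‖prox z - z‖ ^ 2 : ℝ) : EReal) := by
  intro z
  have h1 : (eg z : EReal) = g (prox z) + ((1 / (2 * lam) * ‖prox z - z‖ ^ 2 : ℝ) : EReal) := by
    rw [heg z]
    refine le_antisymm (iInf_le _ (prox z)) (le_iInf fun y => hprox z y)
  have hne : g (prox z) ≠ ⊤ := by
    intro h
    rw [h, EReal.top_add_coe] at h1
    exact (EReal.coe_ne_top _) h1
  have hr : ((g (prox z)).toReal : EReal) = g (prox z) := EReal.coe_toReal hne (hnebot _)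
  rw [← hr, ← EReal.coe_add, EReal.coe_eq_coe_iff] at h1
  rw [← hr, EReal.coe_eq_coe_iff]
  linarith

/-- L2a : upper bound on the envelope anywhere via the prox point of z -/
lemma moreau_L2a (hnebot : ∀ z, g z ≠ ⊥)
    (hprox : ∀ z y : EuclideanSpace ℝ (Fin n),
      g (prox z) + ((1 / (2 * lam) * ‖prox z - z‖ ^ 2 : ℝ) : EReal) ≤
        g y + ((1 / (2 * lam) * ‖y - z‖ ^ 2 : ℝ) : EReal))
    (heg : ∀ z, (eg z : EReal) =
      ⨅ y, (g y + ((1 / (2 * lam) * ‖y - z‖ ^ 2 : ℝ) : EReal))) :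
    ∀ z w, eg w ≤ (eg z - 1 / (2 * lam) * ‖prox z - z‖ ^ 2)
      + 1 / (2 * lam) * ‖prox z - w‖ ^ 2 := by
  intro z w
  have h1 : (eg w : EReal) ≤ g (prox z) + ((1 / (2 * lam) * ‖prox z - w‖ ^ 2 : ℝ) : EReal) := by
    rw [heg w]; exact iInf_le _ (prox z)
  rw [moreau_L1 g lam prox eg hnebot hprox heg z, ← EReal.coe_add, EReal.coe_le_coe_iff] at h1
  exact h1

end Aux

section Aux2
variable {n : ℕ} (g : EuclideanSpace ℝ (Fin n) → EReal) (lam : ℝ)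
  (prox : EuclideanSpace ℝ (Fin n) → EuclideanSpace ℝ (Fin n))
  (eg : EuclideanSpace ℝ (Fin n) → ℝ)

/-- L3 : strong minimality of the prox point -/
lemma moreau_L3 (hlam : 0 < lam) (hnebot : ∀ z, g z ≠ ⊥)
    (hconv : ∀ u v : EuclideanSpace ℝ (Fin n), ∀ t : ℝ, 0 ≤ t → t ≤ 1 →
      g (t • u + (1 - t) • v) ≤ (t : EReal) * g u + ((1 - t : ℝ) : EReal) * g v)
    (hprox : ∀ z y : EuclideanSpace ℝ (Fin n),
      g (prox z) + ((1 / (2 * lam) * ‖prox z - z‖ ^ 2 : ℝ) : EReal) ≤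
        g y + ((1 / (2 * lam) * ‖y - z‖ ^ 2 : ℝ) : EReal))
    (heg : ∀ z, (eg z : EReal) =
      ⨅ y, (g y + ((1 / (2 * lam) * ‖y - z‖ ^ 2 : ℝ) : EReal))) :
    ∀ z y (ry : ℝ), g y = (ry : EReal) →
      eg z + 1 / (2 * lam) * ‖y - prox z‖ ^ 2 ≤ ry + 1 / (2 * lam) * ‖y - z‖ ^ 2 := by
  intro z y ry hy
  set c : ℝ := 1 / (2 * lam) with hc
  have hcpos : 0 < c := by rw [hc]; positivity
  have hL1 := moreau_L1 g lam prox eg hnebot hprox heg z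
  set r : ℝ := eg z - c * ‖prox z - z‖ ^ 2 with hrdef
  have key : ∀ t : ℝ, 0 < t → t < 1 →
      eg z + c * (1 - t) * ‖y - prox z‖ ^ 2 ≤ ry + c * ‖y - z‖ ^ 2 := by
    intro t ht0 ht1
    have hyt := hprox z (t • y + (1 - t) • prox z)
    have hcv := hconv y (prox z) t ht0.le ht1.le
    rw [hy, hL1] at hcv
    rw [hL1] at hyt
    have hcv' : g (t • y + (1 - t) • prox z) ≤ ((t * ry + (1 - t) * r : ℝ) : EReal) := by
      rw [EReal.coe_add, EReal.coe_mul, EReal.coe_mul]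
      exact hcv
    have hchain : ((r + c * ‖prox z - z‖ ^ 2 : ℝ) : EReal) ≤
        ((t * ry + (1 - t) * r + c * ‖t • y + (1 - t) • prox z - z‖ ^ 2 : ℝ) : EReal) := by
      rw [EReal.coe_add (t * ry + (1 - t) * r), EReal.coe_add]
      calc (r : EReal) + ((c * ‖prox z - z‖ ^ 2 : ℝ) : EReal) ≤
            g (t • y + (1 - t) • prox z) + ((c * ‖t • y + (1 - t) • prox z - z‖ ^ 2 : ℝ) : EReal) := hyt
        _ ≤ ((t * ry + (1 - t) * r : ℝ) : EReal) + ((c * ‖t • y + (1 - t) • prox z - z‖ ^ 2 : ℝ) : EReal) := by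
            exact add_le_add_left hcv' _
    rw [EReal.coe_le_coe_iff] at hchain
    have hnorm : ‖t • y + (1 - t) • prox z - z‖ ^ 2
        = t * ‖y - z‖ ^ 2 + (1 - t) * ‖prox z - z‖ ^ 2 - t * (1 - t) * ‖y - prox z‖ ^ 2 := by
      have hv : t • y + (1 - t) • prox z - z = t • (y - z) + (1 - t) • (prox z - z) := by
        module
      rw [hv, norm_combo]
      have : (y - z) - (prox z - z) = y - prox z := by abel
      rw [this]
    rw [hnorm] at hchain
    -- hchain : r + c‖Pz-z‖² ≤ t ry + (1-t) r + c (t‖y-z‖² + (1-t)‖Pz-z‖² - t(1-t)‖y-Pz‖²)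
    have hegz : eg z = r + c * ‖prox z - z‖ ^ 2 := by rw [hrdef]; ring
    rw [hegz]
    nlinarith [hchain, ht0, mul_pos ht0 hcpos]
  -- pass to the limit t → 0⁺
  have hlim : Tendsto (fun t : ℝ => eg z + c * (1 - t) * ‖y - prox z‖ ^ 2) (𝓝[>] 0)
      (𝓝 (eg z + c * (1 - 0) * ‖y - prox z‖ ^ 2)) := by
    apply Tendsto.mono_left _ nhdsWithin_le_nhds
    exact (tendsto_const_nhds.add (((tendsto_const_nhds.sub tendsto_id).const_mul c).mul
      tendsto_const_nhds))
  have hev : ∀ᶠ t in (𝓝[>] (0:ℝ)),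
      (fun t : ℝ => eg z + c * (1 - t) * ‖y - prox z‖ ^ 2) t ≤ ry + c * ‖y - z‖ ^ 2 := by
    filter_upwards [Ioo_mem_nhdsGT_of_mem (Set.mem_Ico.mpr ⟨le_refl (0:ℝ), one_pos⟩)] with t ht
    exact key t ht.1 ht.2
  have := le_of_tendsto hlim hev
  simpa using this

lemma inner_four' {E : Type*} [NormedAddCommGroup E] [InnerProductSpace ℝ E]
    (A B z w : E) :
    ‖B - z‖ ^ 2 - ‖B - w‖ ^ 2 + ‖A - w‖ ^ 2 - ‖A - z‖ ^ 2 = 2 * ⟪A - B, z - w⟫ := by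
  have e1 := norm_sub_sq_real B z
  have e2 := norm_sub_sq_real B w
  have e3 := norm_sub_sq_real A w
  have e4 := norm_sub_sq_real A z
  have e5 : ⟪A - B, z - w⟫ = ⟪A, z⟫ - ⟪A, w⟫ - ⟪B, z⟫ + ⟪B, w⟫ := by
    rw [inner_sub_left, inner_sub_right, inner_sub_right]; ring
  rw [e1, e2, e3, e4, e5]; ring

/-- L4 : the prox map is nonexpansive -/
lemma moreau_L4 (hlam : 0 < lam) (hnebot : ∀ z, g z ≠ ⊥)
    (hconv : ∀ u v : EuclideanSpace ℝ (Fin n), ∀ t : ℝ, 0 ≤ t → t ≤ 1 →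
      g (t • u + (1 - t) • v) ≤ (t : EReal) * g u + ((1 - t : ℝ) : EReal) * g v)
    (hprox : ∀ z y : EuclideanSpace ℝ (Fin n),
      g (prox z) + ((1 / (2 * lam) * ‖prox z - z‖ ^ 2 : ℝ) : EReal) ≤
        g y + ((1 / (2 * lam) * ‖y - z‖ ^ 2 : ℝ) : EReal))
    (heg : ∀ z, (eg z : EReal) =
      ⨅ y, (g y + ((1 / (2 * lam) * ‖y - z‖ ^ 2 : ℝ) : EReal))) :
    ∀ z w, ‖prox z - prox w‖ ≤ ‖z - w‖ := by
  intro z w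
  set c : ℝ := 1 / (2 * lam) with hc
  have hcpos : 0 < c := by rw [hc]; positivity
  set A := prox z
  set B := prox w
  have h1 := moreau_L3 g lam prox eg hlam hnebot hconv hprox heg z B
    (eg w - 1 / (2 * lam) * ‖B - w‖ ^ 2)
    (moreau_L1 g lam prox eg hnebot hprox heg w)
  have h2 := moreau_L3 g lam prox eg hlam hnebot hconv hprox heg w A
    (eg z - 1 / (2 * lam) * ‖A - z‖ ^ 2)
    (moreau_L1 g lam prox eg hnebot hprox heg z)
  -- h1 : eg z + c‖B - A‖² ≤ (eg w - c‖B-w‖²) + c‖B - z‖²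
  -- h2 : eg w + c‖A - B‖² ≤ (eg z - c‖A-z‖²) + c‖A - w‖²
  have hBA : ‖B - A‖ = ‖A - B‖ := norm_sub_rev _ _
  rw [hBA] at h1
  have hiq := inner_four' A B z w
  have hkey : ‖A - B‖ ^ 2 ≤ ⟪A - B, z - w⟫ := by nlinarith [h1, h2, hiq, hcpos]
  have hcs := real_inner_le_norm (A - B) (z - w)
  nlinarith [norm_nonneg (A - B), norm_nonneg (z - w), hkey, hcs]

/-- L5 : the envelope is differentiable with gradient (z - prox z)/lam -/
lemma moreau_L5 (hlam : 0 < lam) (hnebot : ∀ z, g z ≠ ⊥)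
    (hconv : ∀ u v : EuclideanSpace ℝ (Fin n), ∀ t : ℝ, 0 ≤ t → t ≤ 1 →
      g (t • u + (1 - t) • v) ≤ (t : EReal) * g u + ((1 - t : ℝ) : EReal) * g v)
    (hprox : ∀ z y : EuclideanSpace ℝ (Fin n),
      g (prox z) + ((1 / (2 * lam) * ‖prox z - z‖ ^ 2 : ℝ) : EReal) ≤
        g y + ((1 / (2 * lam) * ‖y - z‖ ^ 2 : ℝ) : EReal))
    (heg : ∀ z, (eg z : EReal) =
      ⨅ y, (g y + ((1 / (2 * lam) * ‖y - z‖ ^ 2 : ℝ) : EReal))) :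
    ∀ z, HasGradientAt eg ((1 / lam) • (z - prox z)) z := by
  intro z
  set c : ℝ := 1 / (2 * lam) with hc
  have hcpos : 0 < c := by rw [hc]; positivity
  set C : ℝ := 2 / lam + c with hC
  have hCpos : 0 < C := by rw [hC]; positivity
  have hquad : ∀ z w : EuclideanSpace ℝ (Fin n),
      eg w - eg z - ⟪(1 / lam) • (z - prox z), w - z⟫ ≤ c * ‖w - z‖ ^ 2 := by
    intro z w
    have h := moreau_L2a g lam prox eg hnebot hprox heg z w
    have hinner : ⟪(1 / lam) • (z - prox z), w - z⟫ = (1/lam) * ⟪z - prox z, w - z⟫ :=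
      real_inner_smul_left _ _ _
    have hexp : ‖prox z - w‖ ^ 2 = ‖prox z - z‖ ^ 2 - 2 * ⟪prox z - z, w - z⟫ + ‖w - z‖ ^ 2 := by
      have : prox z - w = (prox z - z) - (w - z) := by abel
      rw [this, norm_sub_sq_real]
    have hii : ⟪z - prox z, w - z⟫ = - ⟪prox z - z, w - z⟫ := by
      have : z - prox z = -(prox z - z) := by abel
      rw [this, inner_neg_left]
    rw [hinner, hii]
    rw [hexp] at h
    have h2lam : (1:ℝ)/lam = 2 * c := by rw [hc]; field_simp
    rw [h2lam]
    nlinarith [h]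
  have hbound : ∀ w : EuclideanSpace ℝ (Fin n),
      |eg w - eg z - ⟪(1 / lam) • (z - prox z), w - z⟫| ≤ C * ‖w - z‖ ^ 2 := by
    intro w
    rw [abs_le]
    constructor
    · -- lower bound
      have h := hquad w z
      -- eg z - eg w - ⟪v w, z - w⟫ ≤ c‖z-w‖²
      have hvdiff : ‖(1 / lam) • (w - prox w) - (1 / lam) • (z - prox z)‖ ≤ (2/lam) * ‖w - z‖ := by
        rw [← smul_sub, norm_smul]
        have hne : ‖(w - prox w) - (z - prox z)‖ ≤ 2 * ‖w - z‖ := by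
          have h1 : (w - prox w) - (z - prox z) = (w - z) - (prox w - prox z) := by abel
          rw [h1]
          have h2 := norm_sub_le (w - z) (prox w - prox z)
          have h3 := moreau_L4 g lam prox eg hlam hnebot hconv hprox heg w z
          linarith
        have : ‖(1:ℝ)/lam‖ = 1/lam := by
          rw [Real.norm_eq_abs, abs_of_pos]; positivity
        rw [this]
        calc 1/lam * ‖(w - prox w) - (z - prox z)‖ ≤ 1/lam * (2 * ‖w - z‖) := by
              apply mul_le_mul_of_nonneg_left hne; positivity
          _ = 2/lam * ‖w - z‖ := by ring
      -- ⟪v w - v z, w - z⟫ ≥ -‖v w - v z‖ ‖w - z‖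
      have hip : ⟪(1 / lam) • (w - prox w) - (1 / lam) • (z - prox z), w - z⟫
          ≥ -((2/lam) * ‖w - z‖ * ‖w - z‖) := by
        have := real_inner_le_norm ((1 / lam) • (z - prox z) - (1 / lam) • (w - prox w)) (w - z)
        have hrev : ⟪(1 / lam) • (z - prox z) - (1 / lam) • (w - prox w), w - z⟫
            = -⟪(1 / lam) • (w - prox w) - (1 / lam) • (z - prox z), w - z⟫ := by
          rw [show (1 / lam) • (z - prox z) - (1 / lam) • (w - prox w)
            = -((1 / lam) • (w - prox w) - (1 / lam) • (z - prox z)) by abel, inner_neg_left]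
        rw [hrev] at this
        have hn : ‖(1 / lam) • (z - prox z) - (1 / lam) • (w - prox w)‖
            = ‖(1 / lam) • (w - prox w) - (1 / lam) • (z - prox z)‖ := norm_sub_rev _ _
        rw [hn] at this
        nlinarith [hvdiff, norm_nonneg (w - z), this]
      have hsplit : ⟪(1 / lam) • (w - prox w) - (1 / lam) • (z - prox z), w - z⟫
          = ⟪(1 / lam) • (w - prox w), w - z⟫ - ⟪(1 / lam) • (z - prox z), w - z⟫ :=
        inner_sub_left _ _ _
      have hzw : ⟪(1 / lam) • (w - prox w), z - w⟫ = -⟪(1 / lam) • (w - prox w), w - z⟫ := by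
        rw [show z - w = -(w - z) by abel, inner_neg_right]
      have hznorm : ‖z - w‖ = ‖w - z‖ := norm_sub_rev _ _
      rw [hzw, hznorm] at h
      nlinarith [h, hip, hsplit]
    · have h := hquad z w
      have h2l : (0:ℝ) < 2 / lam := by positivity
      nlinarith [h, sq_nonneg ‖w - z‖, h2l]
  rw [hasGradientAt_iff_isLittleO, Asymptotics.isLittleO_iff]
  intro ε hε
  have hball : Metric.closedBall z (ε / C) ∈ 𝓝 z := Metric.closedBall_mem_nhds z (by positivity)
  filter_upwards [hball] with w hw
  have hwz : ‖w - z‖ ≤ ε / C := by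
    rw [Metric.mem_closedBall, dist_eq_norm] at hw; exact hw
  have hb := hbound w
  rw [Real.norm_eq_abs]
  calc |eg w - eg z - ⟪(1 / lam) • (z - prox z), w - z⟫| ≤ C * ‖w - z‖ ^ 2 := hb
    _ = (C * ‖w - z‖) * ‖w - z‖ := by ring
    _ ≤ ε * ‖w - z‖ := by
        apply mul_le_mul_of_nonneg_right _ (norm_nonneg _)
        calc C * ‖w - z‖ ≤ C * (ε / C) := by
              apply mul_le_mul_of_nonneg_left hwz hCpos.le
          _ = ε := by field_simp
    _ = ε * ‖w - z‖ := rfl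

end Aux2
lemma norm_tri' {E : Type*} [NormedAddCommGroup E] (a b c : E) :
    ‖a - c‖ ≤ ‖a - b‖ + ‖b - c‖ := by
  have h : a - c = (a - b) + (b - c) := by abel
  rw [h]; exact norm_add_le _ _

lemma aux_tangent {β u w : ℝ} (hβ0 : 0 ≤ β) (hβ1 : β ≤ 1) (hu : 0 < u) (hw : 0 < w) :
    u ^ β ≤ w ^ β + β * w ^ (β - 1) * (u - w) := by
  have hs : (-1 : ℝ) ≤ u / w - 1 := by
    have : (0:ℝ) ≤ u / w := by positivity
    linarith
  have h1 := rpow_one_add_le_one_add_mul_self hs hβ0 hβ1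
  have h2 : (1 + (u / w - 1)) = u / w := by ring
  rw [h2] at h1
  have hwβ : (0:ℝ) < w ^ β := Real.rpow_pos_of_pos hw β
  have h3 : (u / w) ^ β = u ^ β / w ^ β := Real.div_rpow hu.le hw.le β
  rw [h3] at h1
  have h4 : w ^ (β - 1) = w ^ β / w := by
    rw [Real.rpow_sub hw, Real.rpow_one]
  have h5 := mul_le_mul_of_nonneg_right h1 hwβ.le
  calc u ^ β = u ^ β / w ^ β * w ^ β := by field_simp
    _ ≤ (1 + β * (u / w - 1)) * w ^ β := h5
    _ = w ^ β + β * (w ^ β / w) * (u - w) := by field_simp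
    _ = w ^ β + β * w ^ (β - 1) * (u - w) := by rw [h4]

set_option maxHeartbeats 2000000 in
/-- GIPPM: convergence rates of the iterates when the Moreau
envelope e_λg satisfies the KL property at an accumulation point with
ψ(t) = M t^q: linear rate for q ∈ (0,1/2] and rate O(k^{−(1−q)/(2q−1)}) for
q ∈ (1/2,1). -/
theorem GIPPM_rates_under_KL {n : ℕ}
    (g : EuclideanSpace ℝ (Fin n) → EReal)
    (hproper : ∃ z, g z ≠ ⊤) (hnebot : ∀ z, g z ≠ ⊥)
    (hlsc : LowerSemicontinuous g)
    (hconv : ∀ u v : EuclideanSpace ℝ (Fin n), ∀ t : ℝ, 0 ≤ t → t ≤ 1 →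
      g (t • u + (1 - t) • v) ≤ (t : EReal) * g u + ((1 - t : ℝ) : EReal) * g v)
    (lam μ : ℝ) (hlam : 0 < lam) (hμ : 2 < μ)
    (prox : EuclideanSpace ℝ (Fin n) → EuclideanSpace ℝ (Fin n))
    (hprox : ∀ z y : EuclideanSpace ℝ (Fin n),
      g (prox z) + ((1 / (2 * lam) * ‖prox z - z‖ ^ 2 : ℝ) : EReal) ≤
        g y + ((1 / (2 * lam) * ‖y - z‖ ^ 2 : ℝ) : EReal))
    (eg : EuclideanSpace ℝ (Fin n) → ℝ)
    (heg : ∀ z, (eg z : EReal) =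
      ⨅ y, (g y + ((1 / (2 * lam) * ‖y - z‖ ^ 2 : ℝ) : EReal)))
    (x p : ℕ → EuclideanSpace ℝ (Fin n)) (ε : ℕ → ℝ) (hε : ∀ k : ℕ, 0 < ε k)
    (herr : ∀ k : ℕ, ‖p k - prox (x k)‖ ≤ lam * ε (k + 1))
    (hbig : ∀ k : ℕ, lam * μ * ε (k + 1) < ‖x k - p k‖)
    (hiter : ∀ k : ℕ, x (k + 1) = p k)
    (hnotmin : ∀ k : ℕ, ∃ y, g y < g (x k))
    (xbar : EuclideanSpace ℝ (Fin n))
    (hacc : ∃ φ : ℕ → ℕ, StrictMono φ ∧ Tendsto (fun k => x (φ k)) atTop (𝓝 xbar))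
    (M q : ℝ) (hM : 0 < M) (hq : q ∈ Set.Ioo (0 : ℝ) 1)
    (hKL : ∃ η > (0 : ℝ), ∃ U ∈ 𝓝 xbar,
      ∀ y ∈ U, eg xbar < eg y → eg y < eg xbar + η →
        M * (eg y - eg xbar) ^ q ≤ ‖gradient eg y‖) :
    (q ≤ 1 / 2 →
      ∃ c > (0 : ℝ), ∃ ρ ∈ Set.Ioo (0 : ℝ) 1, ∀ k : ℕ, ‖x k - xbar‖ ≤ c * ρ ^ k) ∧
    (1 / 2 < q →
      ∃ c > (0 : ℝ), ∀ᶠ k in atTop,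
        ‖x k - xbar‖ ≤ c * (k : ℝ) ^ (-(1 - q) / (2 * q - 1))) := by
  obtain ⟨hq0, hq1⟩ := hq
  obtain ⟨φ, hφmono, hφt⟩ := hacc
  have hμ0 : 0 < μ := by linarith
  -- gradient of the envelope
  have hgradAt : ∀ z, HasGradientAt eg ((1 / lam) • (z - prox z)) z :=
    moreau_L5 g lam prox eg hlam hnebot hconv hprox heg
  have hgrad : ∀ z, gradient eg z = (1 / lam) • (z - prox z) :=
    fun z => (hgradAt z).gradient
  have hcont : Continuous eg := continuous_iff_continuousAt.mpr fun z =>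
    (hgradAt z).hasFDerivAt.differentiableAt.continuousAt
  set a : ℝ := (1 - 2/μ) / (2*lam) with ha
  have h2μ : 2/μ < 1 := (div_lt_one hμ0).mpr hμ
  have hapos : 0 < a := by rw [ha]; apply div_pos (by linarith) (by linarith)
  set d : ℕ → ℝ := fun k => ‖x k - x (k+1)‖ with hd
  have hdp : ∀ k, d k = ‖x k - p k‖ := fun k => by rw [hd]; simp only; rw [hiter k]
  have hdpos : ∀ k, 0 < d k := fun k => by
    rw [hdp k]
    have h1 : 0 < lam * μ * ε (k+1) :=
      mul_pos (mul_pos hlam (by linarith)) (hε (k+1))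
    linarith [hbig k]
  -- sufficient decrease
  have hdesc : ∀ k, eg (x (k+1)) ≤ eg (x k) - a * d k ^ 2 := by
    intro k
    have hL2a := moreau_L2a g lam prox eg hnebot hprox heg (x k) (p k)
    rw [hiter k, hdp k]
    have he : 0 < ε (k+1) := hε (k+1)
    have h1 : ‖prox (x k) - p k‖ ≤ lam * ε (k+1) := by rw [norm_sub_rev]; exact herr k
    have h2 : lam * μ * ε (k+1) < ‖x k - p k‖ := hbig k
    have h3 : ‖x k - p k‖ ≤ ‖x k - prox (x k)‖ + ‖prox (x k) - p k‖ :=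
      norm_tri' (x k) (prox (x k)) (p k)
    have h4 : ‖prox (x k) - x k‖ = ‖x k - prox (x k)‖ := norm_sub_rev _ _
    have hle : lam * ε (k+1) < ‖x k - p k‖ := by nlinarith [mul_pos hlam he]
    have hPz : ‖x k - p k‖ - lam * ε (k+1) ≤ ‖prox (x k) - x k‖ := by
      rw [h4]; linarith
    have hsq1 : ‖prox (x k) - p k‖ ^ 2 ≤ (lam * ε (k+1))^2 := by
      nlinarith [norm_nonneg (prox (x k) - p k)]
    have hsq2 : (‖x k - p k‖ - lam * ε (k+1))^2 ≤ ‖prox (x k) - x k‖ ^ 2 := by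
      nlinarith [hPz, hle]
    have hprod : ‖x k - p k‖ * (lam * μ * ε (k+1)) ≤ ‖x k - p k‖ * ‖x k - p k‖ :=
      mul_le_mul_of_nonneg_left h2.le (norm_nonneg _)
    have hcpos' : (0:ℝ) ≤ 1/(2*lam) := by positivity
    have hcE : 1/(2*lam) * ‖prox (x k) - p k‖^2 ≤ 1/(2*lam) * (lam * ε (k+1))^2 :=
      mul_le_mul_of_nonneg_left hsq1 hcpos'
    have hcP : 1/(2*lam) * (‖x k - p k‖ - lam * ε (k+1))^2 ≤ 1/(2*lam) * ‖prox (x k) - x k‖^2 :=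
      mul_le_mul_of_nonneg_left hsq2 hcpos'
    have h5 : 2*‖x k - p k‖*(lam*ε (k+1)) ≤ 2/μ * ‖x k - p k‖^2 := by
      have h51 := mul_le_mul_of_nonneg_left hprod (le_of_lt (show (0:ℝ) < 2/μ by positivity))
      calc 2*‖x k - p k‖*(lam*ε (k+1)) = 2/μ * (‖x k - p k‖*(lam*μ*ε (k+1))) := by
            field_simp
        _ ≤ 2/μ * (‖x k - p k‖*‖x k - p k‖) := h51
        _ = 2/μ * ‖x k - p k‖^2 := by ring
    have h6 : (lam * ε (k+1))^2 - (‖x k - p k‖ - lam * ε (k+1))^2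
        ≤ 2/μ*‖x k - p k‖^2 - ‖x k - p k‖^2 := by nlinarith [h5]
    have h7 := mul_le_mul_of_nonneg_left h6 hcpos'
    have h8 : 1/(2*lam) * (2/μ*‖x k - p k‖^2 - ‖x k - p k‖^2) = -a*‖x k - p k‖^2 := by
      rw [ha]; field_simp; ring
    rw [mul_sub, h8] at h7
    linarith [hL2a, hcE, hcP, h7]
  -- gradient norm bound
  have hgb : ∀ k, ‖(1 / lam) • (x k - prox (x k))‖ ≤ 2 / lam * d k := by
    intro k
    rw [norm_smul]
    have hnl : ‖(1:ℝ)/lam‖ = 1/lam := by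
      rw [Real.norm_eq_abs, abs_of_pos (by positivity)]
    rw [hnl]
    have h1 : ‖x k - prox (x k)‖ ≤ d k + lam * ε (k+1) := by
      rw [hdp k]
      have := norm_tri' (x k) (p k) (prox (x k))
      linarith [herr k]
    have h2 : lam * ε (k+1) ≤ d k := by
      rw [hdp k]
      nlinarith [hbig k, mul_pos hlam (hε (k+1))]
    calc 1/lam * ‖x k - prox (x k)‖ ≤ 1/lam * (2 * d k) := by
          apply mul_le_mul_of_nonneg_left _ (by positivity)
          linarith
      _ = 2/lam * d k := by ring
  -- monotonicity and limit of envelope values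
  set L : ℝ := eg xbar with hL
  have hant : ∀ j k : ℕ, j ≤ k → eg (x k) ≤ eg (x j) := by
    intro j k hjk
    induction k, hjk using Nat.le_induction with
    | base => exact le_refl _
    | succ m hm ih =>
      have := hdesc m
      nlinarith [mul_nonneg hapos.le (sq_nonneg (d m))]
  have hφtop : Tendsto φ atTop atTop := hφmono.tendsto_atTop
  have hsubt : Tendsto (fun j => eg (x (φ j))) atTop (𝓝 L) := (hcont.tendsto xbar).comp hφt
  have hgeL : ∀ k, L ≤ eg (x k) := by
    intro k
    apply le_of_tendsto hsubt
    filter_upwards [eventually_ge_atTop k] with j hj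
    exact hant k (φ j) (le_trans hj hφmono.le_apply)
  have hstrict : ∀ k, eg (x (k+1)) < eg (x k) := by
    intro k
    have h1 := hdesc k
    nlinarith [mul_pos hapos (pow_pos (hdpos k) 2)]
  have hLlt : ∀ k, L < eg (x k) := fun k => lt_of_le_of_lt (hgeL (k+1)) (hstrict k)
  have htende : Tendsto (fun k => eg (x k)) atTop (𝓝 L) := by
    have hA : Antitone (fun k => eg (x k)) := antitone_nat_of_succ_le (fun k => (hstrict k).le)
    have hbdd : BddBelow (Set.range fun k => eg (x k)) := by
      refine ⟨L, ?_⟩; rintro y ⟨k, rfl⟩; exact hgeL k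
    have h1 := tendsto_atTop_ciInf hA hbdd
    have h2 : Tendsto (fun j => eg (x (φ j))) atTop (𝓝 (⨅ k, eg (x k))) := h1.comp hφtop
    rwa [tendsto_nhds_unique h2 hsubt] at h1
  set Del : ℕ → ℝ := fun k => eg (x k) - L with hDel
  have hDelpos : ∀ k, 0 < Del k := fun k => sub_pos.mpr (hLlt k)
  have hDel0 : Tendsto Del atTop (𝓝 0) := by
    have := htende.sub (tendsto_const_nhds (x := L))
    simpa using this
  have hDelant : Antitone Del := fun j k h => sub_le_sub_right (hant j k h) L
  obtain ⟨η, hη, U, hU, hKLU⟩ := hKL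
  obtain ⟨r, hr, hball⟩ := Metric.nhds_basis_closedBall.mem_iff.mp hU
  set b : ℝ := a * (lam * M / 2)^2 with hb
  have hbpos : 0 < b := by rw [hb]; positivity
  set c₁ : ℝ := (1 - q) * a * (lam * M) / 2 with hc₁
  have hc₁pos : 0 < c₁ := by
    rw [hc₁]
    apply div_pos _ (by norm_num)
    exact mul_pos (mul_pos (by linarith) hapos) (by positivity)
  set Phi : ℕ → ℝ := fun k => Del k ^ (1 - q) with hPhi
  have hPhipos : ∀ k, 0 < Phi k := fun k => Real.rpow_pos_of_pos (hDelpos k) _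
  -- single KL step
  have hstep : ∀ k, x k ∈ U → Del k < η →
      c₁ * d k ≤ Phi k - Phi (k+1) ∧ Del (k+1) ≤ Del k - b * Del k ^ (2*q) := by
    intro k hin hlt
    have hKLk := hKLU (x k) hin (hLlt k) (by
      have h2 : eg (x k) - L < η := hlt
      linarith)
    rw [hgrad (x k)] at hKLk
    have hKL2 : M * Del k ^ q ≤ 2 / lam * d k := le_trans hKLk (hgb k)
    have hq2 : 0 < Del k ^ q := Real.rpow_pos_of_pos (hDelpos k) q
    have hdk := hdpos k
    have hKL2' : M * Del k ^ q * lam ≤ 2 * d k := by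
      have h := mul_le_mul_of_nonneg_right hKL2 hlam.le
      have h2 : 2 / lam * d k * lam = 2 * d k := by field_simp
      rw [h2] at h
      exact h
    have hdlow : lam * M * Del k ^ q / 2 ≤ d k := by nlinarith
    constructor
    · -- Phi decrease
      have htan := aux_tangent (show (0:ℝ) ≤ 1 - q by linarith) (by linarith)
        (hDelpos (k+1)) (hDelpos k)
      have hexp : (1 - q) - 1 = -q := by ring
      rw [hexp] at htan
      have hnegq : Del k ^ (-q : ℝ) = (Del k ^ q)⁻¹ := Real.rpow_neg (hDelpos k).le q
      have hdec : a * d k ^ 2 ≤ Del k - Del (k+1) := by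
        have h := hdesc k
        have h1 : Del k = eg (x k) - L := rfl
        have h2 : Del (k+1) = eg (x (k+1)) - L := rfl
        rw [h1, h2]; linarith
      have hT : 0 < Del k ^ (-q:ℝ) := Real.rpow_pos_of_pos (hDelpos k) _
      have h1 : (1-q) * (Del k ^ (-q:ℝ)) * (Del k - Del (k+1)) ≤ Phi k - Phi (k+1) := by
        have hPk : Phi k = Del k ^ (1-q) := rfl
        have hPk1 : Phi (k+1) = Del (k+1) ^ (1-q) := rfl
        rw [hPk, hPk1]
        nlinarith [htan]
      have hinv : lam * M / 2 * d k ≤ Del k ^ (-q:ℝ) * d k ^ 2 := by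
        rw [hnegq]
        have hkey : lam * M / 2 * d k * Del k ^ q ≤ d k ^ 2 := by nlinarith
        calc lam * M / 2 * d k = (lam * M / 2 * d k * Del k ^ q) * (Del k ^ q)⁻¹ := by
              field_simp
          _ ≤ d k ^ 2 * (Del k ^ q)⁻¹ := by
              apply mul_le_mul_of_nonneg_right hkey (by positivity)
          _ = (Del k ^ q)⁻¹ * d k ^ 2 := by ring
      calc c₁ * d k = (1-q) * a * (lam * M / 2 * d k) := by rw [hc₁]; ring
        _ ≤ (1-q) * a * (Del k ^ (-q:ℝ) * d k ^ 2) := by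
            apply mul_le_mul_of_nonneg_left hinv (by nlinarith)
        _ = (1-q) * (Del k ^ (-q:ℝ)) * (a * d k ^ 2) := by ring
        _ ≤ (1-q) * (Del k ^ (-q:ℝ)) * (Del k - Del (k+1)) := by
            apply mul_le_mul_of_nonneg_left hdec (by nlinarith)
        _ ≤ Phi k - Phi (k+1) := h1
    · -- function value decrease
      have hrw : Del k ^ (2*q) = (Del k ^ q)^2 := by
        rw [show (2*q : ℝ) = q*2 by ring, Real.rpow_mul (hDelpos k).le, Real.rpow_two]
      have hdec : a * d k ^ 2 ≤ Del k - Del (k+1) := by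
        have h := hdesc k
        have h1 : Del k = eg (x k) - L := rfl
        have h2 : Del (k+1) = eg (x (k+1)) - L := rfl
        rw [h1, h2]; linarith
      have h2 : a * (lam * M * Del k ^ q / 2)^2 ≤ a * d k ^2 := by
        apply mul_le_mul_of_nonneg_left _ hapos.le
        have hX : (0:ℝ) ≤ lam * M * Del k ^ q / 2 :=
          div_nonneg (mul_nonneg (mul_nonneg hlam.le hM.le) hq2.le) (by norm_num)
        nlinarith [hdlow, hX]
      rw [hb, hrw]
      have hring : a*(lam*M*Del k^q/2)^2 = a*(lam*M/2)^2*(Del k^q)^2 := by ring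
      show Del (k+1) ≤ Del k - a*(lam*M/2)^2*(Del k^q)^2
      have h3 : a*(lam*M/2)^2*(Del k^q)^2 ≤ a * d k ^ 2 := by rw [← hring]; exact h2
      rw [le_sub_comm]
      exact le_trans h3 hdec
  -- choice of k₀
  set δ : ℝ := min η ((c₁ * (r/2)) ^ ((1-q)⁻¹)) with hδ
  have hδpos : 0 < δ := lt_min hη (Real.rpow_pos_of_pos (by positivity) _)
  obtain ⟨K₁, hK₁⟩ := eventually_atTop.mp (hDel0.eventually_lt_const hδpos)
  obtain ⟨N, hN⟩ := Metric.tendsto_atTop.mp hφt (r/2) (by positivity)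
  set k₀ : ℕ := φ (max N K₁) with hk₀
  have hk₀K₁ : K₁ ≤ k₀ := le_trans (le_max_right N K₁) hφmono.le_apply
  have hx₀ : dist (x k₀) xbar < r/2 := hN (max N K₁) (le_max_left _ _)
  have hΔ₀η : Del k₀ < η := lt_of_lt_of_le (hK₁ k₀ hk₀K₁) (min_le_left _ _)
  have hΦ₀ : Phi k₀ ≤ c₁ * (r/2) := by
    have h1 : Del k₀ ≤ (c₁*(r/2))^((1-q)⁻¹) :=
      le_trans (hK₁ k₀ hk₀K₁).le (min_le_right _ _)
    have h2 : Phi k₀ = Del k₀ ^ (1-q) := rfl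
    rw [h2]
    calc Del k₀ ^ (1-q) ≤ ((c₁*(r/2))^((1-q)⁻¹))^(1-q) :=
          Real.rpow_le_rpow (hDelpos k₀).le h1 (by linarith)
      _ = c₁*(r/2) := Real.rpow_inv_rpow (by positivity) (by intro h; linarith [h] : (1-q:ℝ) ≠ 0)
  -- telescoping
  have htel : ∀ k m : ℕ, k ≤ m → ‖x m - x k‖ ≤ ∑ j ∈ Finset.Ico k m, d j := by
    intro k m hkm
    induction m, hkm using Nat.le_induction with
    | base => simp
    | succ m hm ih =>
      rw [Finset.sum_Ico_succ_top hm]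
      have h1 : ‖x (m+1) - x k‖ ≤ ‖x (m+1) - x m‖ + ‖x m - x k‖ := norm_tri' _ _ _
      have h2 : ‖x (m+1) - x m‖ = d m := norm_sub_rev (x (m+1)) (x m)
      linarith
  -- capture
  have hmem : ∀ m, k₀ ≤ m → (∑ j ∈ Finset.Ico k₀ m, d j ≤ r/2) → x m ∈ U := by
    intro m hm hsum
    apply hball
    rw [Metric.mem_closedBall]
    have h1 : dist (x m) (x k₀) ≤ r/2 := by
      rw [dist_eq_norm]
      exact le_trans (htel k₀ m hm) hsum
    calc dist (x m) xbar ≤ dist (x m) (x k₀) + dist (x k₀) xbar := dist_triangle _ _ _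
      _ ≤ r/2 + r/2 := by linarith
      _ = r := by ring
  have hmain : ∀ m, k₀ ≤ m → c₁ * (∑ j ∈ Finset.Ico k₀ m, d j) ≤ Phi k₀ - Phi m := by
    intro m hm
    induction m, hm using Nat.le_induction with
    | base => simp
    | succ m hm ih =>
      have hSm : ∑ j ∈ Finset.Ico k₀ m, d j ≤ r/2 := by
        have h1 : c₁ * ∑ j ∈ Finset.Ico k₀ m, d j ≤ c₁ * (r/2) := by
          have := hPhipos m
          linarith
        exact le_of_mul_le_mul_left h1 hc₁pos
      have hxm : x m ∈ U := hmem m hm hSm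
      have hΔm : Del m < η := lt_of_le_of_lt (hDelant hm) hΔ₀η
      obtain ⟨h1, -⟩ := hstep m hxm hΔm
      rw [Finset.sum_Ico_succ_top hm, mul_add]
      linarith
  have hUk : ∀ m, k₀ ≤ m → x m ∈ U ∧ Del m < η := by
    intro m hm
    refine ⟨?_, lt_of_le_of_lt (hDelant hm) hΔ₀η⟩
    apply hmem m hm
    have h1 : c₁ * ∑ j ∈ Finset.Ico k₀ m, d j ≤ c₁ * (r/2) := by
      have := hPhipos m
      linarith [hmain m hm]
    exact le_of_mul_le_mul_left h1 hc₁pos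
  have hstepk : ∀ m, k₀ ≤ m →
      c₁ * d m ≤ Phi m - Phi (m+1) ∧ Del (m+1) ≤ Del m - b * Del m ^ (2*q) :=
    fun m hm => hstep m (hUk m hm).1 (hUk m hm).2
  have htail : ∀ k, k₀ ≤ k → ∀ m, k ≤ m →
      c₁ * ∑ j ∈ Finset.Ico k m, d j ≤ Phi k - Phi m := by
    intro k hk m hm
    induction m, hm using Nat.le_induction with
    | base => simp
    | succ m hm ih =>
      obtain ⟨h1, -⟩ := hstepk m (le_trans hk hm)
      rw [Finset.sum_Ico_succ_top hm, mul_add]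
      linarith
  have hxbound : ∀ k, k₀ ≤ k → ‖x k - xbar‖ ≤ Phi k / c₁ := by
    intro k hk
    by_contra hcon
    push_neg at hcon
    have hδ' : 0 < ‖x k - xbar‖ - Phi k / c₁ := by linarith
    obtain ⟨N', hN'⟩ := Metric.tendsto_atTop.mp hφt _ hδ'
    have hφj : k ≤ φ (max N' k) := le_trans (le_max_right _ _) hφmono.le_apply
    have h1 : ‖x k - x (φ (max N' k))‖ ≤ Phi k / c₁ := by
      have h2 := htail k hk (φ (max N' k)) hφj
      have h3 : ∑ j ∈ Finset.Ico k (φ (max N' k)), d j ≤ Phi k / c₁ := by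
        rw [le_div_iff₀ hc₁pos]
        have := hPhipos (φ (max N' k))
        linarith [h2]
      calc ‖x k - x (φ (max N' k))‖ = ‖x (φ (max N' k)) - x k‖ := norm_sub_rev _ _
        _ ≤ ∑ j ∈ Finset.Ico k (φ (max N' k)), d j := htel k _ hφj
        _ ≤ Phi k / c₁ := h3
    have h4 : dist (x (φ (max N' k))) xbar < ‖x k - xbar‖ - Phi k / c₁ :=
      hN' (max N' k) (le_max_left _ _)
    rw [dist_eq_norm] at h4
    have h5 : ‖x k - xbar‖ ≤ ‖x k - x (φ (max N' k))‖ + ‖x (φ (max N' k)) - xbar‖ :=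
      norm_tri' _ _ _
    linarith
  constructor
  · -- q ≤ 1/2 : linear rate
    intro hq12
    have hrec : ∀ k, k₀ ≤ k → Del (k+1) ≤ (1 - b * Del k₀ ^ (2*q-1)) * Del k := by
      intro k hk
      have h1 := (hstepk k hk).2
      have h2 : Del k ^ (2*q) = Del k ^ (2*q-1) * Del k := by
        rw [show (2*q:ℝ) = (2*q-1) + 1 by ring, Real.rpow_add (hDelpos k), Real.rpow_one]
        norm_num
      have h3 : Del k₀ ^ (2*q-1:ℝ) ≤ Del k ^ (2*q-1:ℝ) :=
        Real.rpow_le_rpow_of_nonpos (hDelpos k) (hDelant hk) (by linarith)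
      have h4 : b * (Del k₀ ^ (2*q-1:ℝ) * Del k) ≤ b * (Del k ^ (2*q-1:ℝ) * Del k) := by
        apply mul_le_mul_of_nonneg_left _ hbpos.le
        exact mul_le_mul_of_nonneg_right h3 (hDelpos k).le
      rw [h2] at h1
      calc Del (k+1) ≤ Del k - b * (Del k ^ (2*q-1:ℝ) * Del k) := by linarith [h1]
        _ ≤ Del k - b * (Del k₀ ^ (2*q-1:ℝ) * Del k) := by linarith [h4]
        _ = (1 - b * Del k₀ ^ (2*q-1:ℝ)) * Del k := by ring
    set τ : ℝ := 1 - b * Del k₀ ^ (2*q-1) with hτ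
    have hτpos : 0 < τ := by
      have h1 := hrec k₀ (le_refl k₀)
      nlinarith [hDelpos (k₀+1), hDelpos k₀]
    have hτlt : τ < 1 := by
      have h1 : 0 < b * Del k₀ ^ (2*q-1:ℝ) :=
        mul_pos hbpos (Real.rpow_pos_of_pos (hDelpos k₀) _)
      rw [hτ]; linarith
    have hgeom : ∀ m : ℕ, Del (k₀ + m) ≤ τ^m * Del k₀ := by
      intro m
      induction m with
      | zero => simp
      | succ m ih =>
        have h1 : Del (k₀ + m + 1) ≤ τ * Del (k₀ + m) := hrec (k₀+m) (Nat.le_add_right _ _)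
        calc Del (k₀ + (m+1)) = Del (k₀ + m + 1) := rfl
          _ ≤ τ * Del (k₀+m) := h1
          _ ≤ τ * (τ^m * Del k₀) := mul_le_mul_of_nonneg_left ih hτpos.le
          _ = τ^(m+1) * Del k₀ := by ring
    set ρ : ℝ := τ ^ (1-q:ℝ) with hρ
    have hρpos : 0 < ρ := Real.rpow_pos_of_pos hτpos _
    have hρlt : ρ < 1 := Real.rpow_lt_one hτpos.le hτlt (by linarith)
    have hpowρ : ∀ m : ℕ, (τ^m : ℝ)^(1-q:ℝ) = ρ^m := by
      intro m
      rw [← Real.rpow_natCast τ m, ← Real.rpow_mul hτpos.le, mul_comm (m:ℝ) (1-q),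
        Real.rpow_mul hτpos.le, Real.rpow_natCast]
    have hfin : ∀ k, k₀ ≤ k → ‖x k - xbar‖ ≤ (Del k₀ ^ (1-q:ℝ) / (c₁ * ρ^k₀)) * ρ^k := by
      intro k hk
      obtain ⟨m, rfl⟩ := Nat.exists_eq_add_of_le hk
      have h0 := hxbound (k₀+m) (Nat.le_add_right _ _)
      have h1 : Phi (k₀+m) ≤ (τ^m * Del k₀)^(1-q:ℝ) := by
        have h1' : Phi (k₀+m) = Del (k₀+m) ^ (1-q:ℝ) := rfl
        rw [h1']
        exact Real.rpow_le_rpow (hDelpos _).le (hgeom m) (by linarith)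
      have h2 : (τ^m * Del k₀)^(1-q:ℝ) = ρ^m * Del k₀^(1-q:ℝ) := by
        rw [Real.mul_rpow (pow_nonneg hτpos.le m) (hDelpos k₀).le, hpowρ]
      have h3 : ‖x (k₀+m) - xbar‖ ≤ ρ^m * Del k₀^(1-q:ℝ) / c₁ := by
        apply le_trans h0
        exact (div_le_div_iff_of_pos_right hc₁pos).mpr (le_trans h1 (le_of_eq h2))
      have h4 : ρ^m * Del k₀^(1-q:ℝ) / c₁ = (Del k₀ ^ (1-q:ℝ) / (c₁ * ρ^k₀)) * ρ^(k₀+m) := by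
        rw [pow_add]
        field_simp
      rw [← h4]; exact h3
    set CB : ℝ := ∑ j ∈ Finset.range k₀, ‖x j - xbar‖ / ρ^j with hCB
    have hCB0 : 0 ≤ CB := Finset.sum_nonneg (fun j _ => by positivity)
    set CA : ℝ := Del k₀ ^ (1-q:ℝ) / (c₁ * ρ^k₀) with hCA
    have hCA0 : 0 ≤ CA := by
      apply div_nonneg (Real.rpow_nonneg (hDelpos k₀).le _)
      positivity
    refine ⟨CA + CB + 1, by linarith, ρ, ⟨hρpos, hρlt⟩, ?_⟩
    intro k
    have hρk : 0 < ρ^k := pow_pos hρpos k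
    rcases le_or_gt k₀ k with hk | hk
    · have h5 := hfin k hk
      nlinarith [h5, mul_nonneg (by linarith : (0:ℝ) ≤ CB + 1) hρk.le]
    · have hterm : ‖x k - xbar‖ / ρ^k ≤ CB :=
        Finset.single_le_sum (f := fun j => ‖x j - xbar‖ / ρ^j)
          (fun i _ => by positivity) (Finset.mem_range.mpr hk)
      have h1 : ‖x k - xbar‖ = (‖x k - xbar‖ / ρ^k) * ρ^k := by field_simp
      rw [h1]
      have h2 : (‖x k - xbar‖ / ρ^k) * ρ^k ≤ CB * ρ^k :=
        mul_le_mul_of_nonneg_right hterm hρk.le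
      nlinarith [h2, mul_nonneg (by linarith : (0:ℝ) ≤ CA + 1) hρk.le]
  · -- q > 1/2 : sublinear rate
    intro hq12
    set β : ℝ := 2*q - 1 with hβ
    have hβ0 : 0 < β := by rw [hβ]; linarith
    have hβ1 : β < 1 := by rw [hβ]; linarith
    have hβne : β ≠ 0 := ne_of_gt hβ0
    have hB : ∀ k, k₀ ≤ k → Del k ^ (-β) + β*b ≤ Del (k+1) ^ (-β) := by
      intro k hk
      have hu : 0 < Del (k+1) := hDelpos (k+1)
      have hw : 0 < Del k := hDelpos k
      have hdd := (hstepk k hk).2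
      set W : ℝ := Del k ^ β with hW
      have hWpos : 0 < W := Real.rpow_pos_of_pos hw β
      have htan := aux_tangent hβ0.le hβ1.le hu hw
      have hw2q : Del k ^ (β-1:ℝ) * Del k ^ (2*q:ℝ) = W^2 := by
        rw [← Real.rpow_add hw, hW, ← Real.rpow_natCast (Del k ^ β) 2,
          ← Real.rpow_mul hw.le]
        congr 1
        rw [hβ]; push_cast; ring
      have hstep2 : β * Del k ^ (β-1:ℝ) * (Del (k+1) - Del k) ≤ -(β*b*W^2) := by
        have h5 : Del (k+1) - Del k ≤ -(b * Del k ^ (2*q:ℝ)) := by linarith [hdd]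
        have h6 : 0 ≤ β * Del k ^ (β-1:ℝ) :=
          mul_nonneg hβ0.le (Real.rpow_nonneg hw.le _)
        have h7 := mul_le_mul_of_nonneg_left h5 h6
        calc β * Del k ^ (β-1:ℝ) * (Del (k+1) - Del k)
            ≤ β * Del k ^ (β-1:ℝ) * -(b * Del k ^ (2*q:ℝ)) := h7
          _ = -(β*b*(Del k ^ (β-1:ℝ) * Del k ^ (2*q:ℝ))) := by ring
          _ = -(β*b*W^2) := by rw [hw2q]
      have h1 : Del (k+1) ^ β ≤ W * (1 - β*b*W) := by
        have hWeq : Del k ^ β = W := rfl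
        calc Del (k+1)^β ≤ W + -(β*b*W^2) := by
              rw [← hWeq]; linarith [htan, hstep2]
          _ = W*(1-β*b*W) := by ring
      have hup : 0 < Del (k+1) ^ β := Real.rpow_pos_of_pos hu β
      have h2 : 0 < 1 - β*b*W := by nlinarith [hup, h1, hWpos]
      have h3 : (W*(1-β*b*W))⁻¹ ≤ (Del (k+1)^β)⁻¹ := by
        have h3' := one_div_le_one_div_of_le hup h1
        simpa [one_div] using h3'
      have h4 : W⁻¹ + β*b ≤ (W*(1-β*b*W))⁻¹ := by
        have hX : 0 < W*(1-β*b*W) := mul_pos hWpos h2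
        have h4' : (W⁻¹ + β*b) * (W*(1-β*b*W)) ≤ 1 := by
          have he : (W⁻¹ + β*b) * (W*(1-β*b*W))
              = (W⁻¹*W)*(1-β*b*W) + β*b*W*(1-β*b*W) := by ring
          rw [he, inv_mul_cancel₀ (ne_of_gt hWpos)]
          nlinarith [sq_nonneg (β*b*W)]
        rw [inv_eq_one_div (W*(1-β*b*W)), le_div_iff₀ hX]
        exact h4'
      have h5 : Del k ^ (-β) = W⁻¹ := by rw [Real.rpow_neg hw.le, hW]
      have h6 : Del (k+1) ^ (-β) = (Del (k+1)^β)⁻¹ := Real.rpow_neg hu.le β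
      rw [h5, h6]
      linarith [h3, h4]
    have hBtot : ∀ m : ℕ, β*b*(m:ℝ) ≤ Del (k₀+m) ^ (-β) := by
      intro m
      induction m with
      | zero => simpa using Real.rpow_nonneg (hDelpos k₀).le (-β)
      | succ m ih =>
        have h1 := hB (k₀+m) (Nat.le_add_right _ _)
        calc β*b*((m+1 : ℕ):ℝ) = β*b*(m:ℝ) + β*b := by push_cast; ring
          _ ≤ Del (k₀+m) ^ (-β) + β*b := by linarith
          _ ≤ Del (k₀+m+1) ^ (-β) := h1
    have hrate : ∀ m : ℕ, 1 ≤ m → Del (k₀+m) ≤ (β*b*(m:ℝ)) ^ (-β⁻¹ : ℝ) := by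
      intro m hm
      have hm1 : (1:ℝ) ≤ (m:ℝ) := by exact_mod_cast hm
      have hY : 0 < β*b*(m:ℝ) := mul_pos (mul_pos hβ0 hbpos) (by linarith)
      have hX := hDelpos (k₀+m)
      have h1 : β*b*(m:ℝ) ≤ (Del (k₀+m) ^ β)⁻¹ := by
        rw [← Real.rpow_neg hX.le]; exact hBtot m
      have h2 : Del (k₀+m) ^ β ≤ (β*b*(m:ℝ))⁻¹ := by
        have h2' := one_div_le_one_div_of_le hY h1
        simpa [one_div] using h2'
      calc Del (k₀+m) = (Del (k₀+m) ^ β) ^ (β⁻¹:ℝ) := (Real.rpow_rpow_inv hX.le hβne).symm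
        _ ≤ ((β*b*(m:ℝ))⁻¹) ^ (β⁻¹:ℝ) :=
            Real.rpow_le_rpow (Real.rpow_nonneg hX.le β) h2 (by positivity)
        _ = (β*b*(m:ℝ)) ^ (-β⁻¹:ℝ) := by
            rw [Real.inv_rpow hY.le, ← Real.rpow_neg hY.le]
    set γ : ℝ := β⁻¹ * (1-q) with hγ
    have hγpos : 0 < γ := mul_pos (inv_pos.mpr hβ0) (by linarith)
    set cc : ℝ := (β*b) ^ (-γ) * 2^γ / c₁ with hcc
    have hccpos : 0 < cc := by
      apply div_pos _ hc₁pos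
      exact mul_pos (Real.rpow_pos_of_pos (mul_pos hβ0 hbpos) _)
        (Real.rpow_pos_of_pos two_pos _)
    refine ⟨cc, hccpos, ?_⟩
    filter_upwards [eventually_ge_atTop (2*k₀+2)] with k hk
    have hexp : (-(1-q)/β : ℝ) = -γ := by rw [hγ]; ring
    have hm1 : 1 ≤ k - k₀ := by omega
    have hk₀le : k₀ + (k - k₀) = k := by omega
    have hmcast : ((k - k₀ : ℕ):ℝ) = (k:ℝ) - (k₀:ℝ) := by
      rw [Nat.cast_sub (by omega)]
    have hkr : (0:ℝ) < (k:ℝ) := by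
      have hknat : 0 < k := by omega
      exact_mod_cast hknat
    have hhalf : (k:ℝ)/2 ≤ ((k-k₀:ℕ):ℝ) := by
      rw [hmcast]
      have hc1 : (2*(k₀:ℝ)+2 : ℝ) ≤ (k:ℝ) := by exact_mod_cast hk
      have hk₀r : (0:ℝ) ≤ (k₀:ℝ) := Nat.cast_nonneg _
      linarith
    have hrk := hrate (k-k₀) hm1
    rw [hk₀le] at hrk
    have hYpos : 0 < β*b*((k-k₀:ℕ):ℝ) := by
      apply mul_pos (mul_pos hβ0 hbpos)
      have h1 : (1:ℝ) ≤ ((k-k₀:ℕ):ℝ) := by exact_mod_cast hm1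
      linarith
    have hP1 : Phi k ≤ (β*b*((k-k₀:ℕ):ℝ)) ^ (-γ:ℝ) := by
      have h1 : Phi k = Del k ^ (1-q:ℝ) := rfl
      rw [h1]
      calc Del k ^ (1-q:ℝ) ≤ ((β*b*((k-k₀:ℕ):ℝ)) ^ (-β⁻¹:ℝ)) ^ (1-q:ℝ) :=
            Real.rpow_le_rpow (hDelpos k).le hrk (by linarith)
        _ = (β*b*((k-k₀:ℕ):ℝ)) ^ (-γ:ℝ) := by
            rw [← Real.rpow_mul hYpos.le]
            congr 1
            rw [hγ]; ring
    have hsplit : (β*b*((k-k₀:ℕ):ℝ)) ^ (-γ:ℝ)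
        = (β*b)^(-γ:ℝ) * ((k-k₀:ℕ):ℝ)^(-γ:ℝ) :=
      Real.mul_rpow (mul_pos hβ0 hbpos).le (Nat.cast_nonneg _)
    have hmono : ((k-k₀:ℕ):ℝ)^(-γ:ℝ) ≤ ((k:ℝ)/2)^(-γ:ℝ) :=
      Real.rpow_le_rpow_of_nonpos (by linarith [hkr]) hhalf (by linarith [hγpos])
    have hhalfrw : ((k:ℝ)/2)^(-γ:ℝ) = 2^γ * (k:ℝ)^(-γ:ℝ) := by
      rw [Real.div_rpow hkr.le (by norm_num : (0:ℝ) ≤ 2),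
        Real.rpow_neg (by norm_num : (0:ℝ) ≤ 2)]
      field_simp
    have hfinal : ‖x k - xbar‖ ≤ cc * (k:ℝ)^(-γ:ℝ) := by
      calc ‖x k - xbar‖ ≤ Phi k / c₁ := hxbound k (by omega)
        _ ≤ ((β*b)^(-γ:ℝ) * ((k-k₀:ℕ):ℝ)^(-γ:ℝ)) / c₁ := by
            apply (div_le_div_iff_of_pos_right hc₁pos).mpr
            rw [← hsplit]; exact hP1
        _ ≤ ((β*b)^(-γ:ℝ) * (2^γ * (k:ℝ)^(-γ:ℝ))) / c₁ := by
            apply (div_le_div_iff_of_pos_right hc₁pos).mpr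
            apply mul_le_mul_of_nonneg_left _ (Real.rpow_nonneg (mul_pos hβ0 hbpos).le _)
            rw [← hhalfrw]; exact hmono
        _ = cc * (k:ℝ)^(-γ:ℝ) := by rw [hcc]; ring
    calc ‖x k - xbar‖ ≤ cc * (k:ℝ)^(-γ:ℝ) := hfinal
      _ = cc * (k:ℝ)^(-(1-q)/β : ℝ) := by rw [hexp]
end

section
/- Let h : ℝⁿ → (−∞, ∞] be a proper, lower semicontinuous, convex function, A ∈ ℝ^{m×n}, b ∈ ℝᵐ with the feasible set {x : Ax = b} nonempty, λ > 0, μ > 2, and let d(y) := inf_{x∈ℝⁿ} { h(x) + ⟨y, Ax − b⟩ } satisfy sup_{y∈ℝᵐ} d(y) > −∞. Let {x^k} ⊂ ℝⁿ, {y^k} ⊂ ℝᵐ, and positive reals {ε_k} satisfy, for all k: L_λ(x^{k+1}, y^k) − inf_{x∈ℝⁿ} L_λ(x, y^k) ≤ λ ε_{k+1}²/2, ‖b − Ax^{k+1}‖ > μ ε_{k+1}, and y^{k+1} = y^k + λ(Ax^{k+1} − b), where no y^k maximizes d over ℝᵐ. If ȳ is an accumulation point of {y^k}, then ȳ is a maximizer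 of d over ℝᵐ (a solution of the dual problem), and moreover ε_k → 0 and Ax^k − b → 0 as k → ∞. -/
open Filter Topology
open scoped RealInnerProductSpace

private lemma amgm {lam : ℝ} (hlam : 0 < lam) (a c : ℝ) :
    a * c ≤ a ^ 2 / (2 * lam) + lam / 2 * c ^ 2 := by
  have key : a ^ 2 / (2 * lam) + lam / 2 * c ^ 2 - a * c = (a - lam * c) ^ 2 / (2 * lam) := by
    field_simp; ring
  nlinarith [div_nonneg (sq_nonneg (a - lam * c)) (by linarith : (0:ℝ) ≤ 2 * lam)]

private lemma key_ineq_s18 {lam μ δ q R S mk t : ℝ} (hlam : 0 < lam) (hμ : 2 < μ)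
    (hθl : mk - 2*δ + lam/3*R^2 ≤ S)
    (hεb : 2*δ*μ^2 ≤ lam*q^2)
    (ht : q^2 - q*R ≤ t) :
    mk + lam*(1/4 - 1/μ^2)*q^2 ≤ S + lam*t := by
  have hμ0 : (0:ℝ) < μ^2 := by nlinarith
  have h4 : (4:ℝ) < μ^2 := by nlinarith
  have hdiv : lam*(1/4 - 1/μ^2)*q^2 = lam*q^2/4 - lam*q^2/μ^2 := by field_simp
  have h2δ : 2*δ ≤ lam*q^2/μ^2 := by rw [le_div_iff₀ hμ0]; linarith [hεb]
  have hlt : lam*(q^2 - q*R) ≤ lam*t := by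
    exact mul_le_mul_of_nonneg_left ht hlam.le
  nlinarith [mul_le_mul_of_nonneg_left (sq_nonneg (R - 3/2*q)) hlam.le]

private lemma norm_combo_sq (θ : ℝ) {E : Type*} [NormedAddCommGroup E]
    [InnerProductSpace ℝ E] (a b : E) :
    ‖(1-θ)•a + θ•b‖^2 = (1-θ)*‖a‖^2 + θ*‖b‖^2 - θ*(1-θ)*‖b - a‖^2 := by
  rw [norm_add_sq_real, norm_sub_sq_real, norm_smul, norm_smul,
    real_inner_smul_left, real_inner_smul_right, Real.norm_eq_abs, Real.norm_eq_abs,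
    mul_pow, mul_pow, sq_abs, sq_abs, real_inner_comm b a]
  ring

set_option maxHeartbeats 1000000 in
/-- GIALM: every accumulation point of the dual iterates {y^k}
is a solution of the dual problem, ε_k → 0, and Ax^k − b → 0. -/
theorem GIALM_dual_convergence {n m : ℕ}
    (h : EuclideanSpace ℝ (Fin n) → EReal)
    (hproper : ∃ x, h x ≠ ⊤) (hnebot : ∀ x, h x ≠ ⊥)
    (hlsc : LowerSemicontinuous h)
    (hconv : ∀ u v : EuclideanSpace ℝ (Fin n), ∀ t : ℝ, 0 ≤ t → t ≤ 1 →
      h (t • u + (1 - t) • v) ≤ (t : EReal) * h u + ((1 - t : ℝ) : EReal) * h v)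
    (A : EuclideanSpace ℝ (Fin n) →L[ℝ] EuclideanSpace ℝ (Fin m))
    (b : EuclideanSpace ℝ (Fin m)) (hfeas : ∃ x, A x = b)
    (lam μ : ℝ) (hlam : 0 < lam) (hμ : 2 < μ)
    (Lag : EuclideanSpace ℝ (Fin n) → EuclideanSpace ℝ (Fin m) → EReal)
    (hLag : ∀ x y, Lag x y =
      h x + ((⟪y, A x - b⟫ : ℝ) : EReal) + ((lam / 2 * ‖A x - b‖ ^ 2 : ℝ) : EReal))
    (d : EuclideanSpace ℝ (Fin m) → EReal)
    (hd : ∀ y, d y = ⨅ x, (h x + ((⟪y, A x - b⟫ : ℝ) : EReal)))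
    (hdbdd : ⊥ < ⨆ y, d y)
    (x : ℕ → EuclideanSpace ℝ (Fin n)) (y : ℕ → EuclideanSpace ℝ (Fin m))
    (ε : ℕ → ℝ) (hε : ∀ k : ℕ, 0 < ε k)
    (hsub : ∀ k : ℕ, Lag (x (k + 1)) (y k) - (⨅ z, Lag z (y k)) ≤
      ((lam * ε (k + 1) ^ 2 / 2 : ℝ) : EReal))
    (hbig : ∀ k : ℕ, μ * ε (k + 1) < ‖b - A (x (k + 1))‖)
    (hiter : ∀ k : ℕ, y (k + 1) = y k + lam • (A (x (k + 1)) - b))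
    (hnotmax : ∀ k : ℕ, ∃ w, d (y k) < d w)
    (ybar : EuclideanSpace ℝ (Fin m))
    (hacc : ∃ φ : ℕ → ℕ, StrictMono φ ∧ Tendsto (fun k => y (φ k)) atTop (𝓝 ybar)) :
    (∀ w, d w ≤ d ybar) ∧ Tendsto ε atTop (𝓝 0) ∧
      Tendsto (fun k => A (x k) - b) atTop (𝓝 0) := by
  classical
  obtain ⟨xp, hxp⟩ := hproper
  obtain ⟨φ, hφ, hφt⟩ := hacc
  -- real value of h at xp
  set hp : ℝ := (h xp).toReal with hp_def
  have hxp' : h xp = ((hp : ℝ) : EReal) := (EReal.coe_toReal hxp (hnebot xp)).symm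
  -- Lagrangian formulas
  have hLagTop : ∀ z w, h z = ⊤ → Lag z w = ⊤ := by
    intro z w hz
    rw [hLag, hz, EReal.top_add_coe, EReal.top_add_coe]
  have hLagR : ∀ z w, h z ≠ ⊤ → Lag z w =
      (((h z).toReal + ⟪w, A z - b⟫ + lam / 2 * ‖A z - b‖ ^ 2 : ℝ) : EReal) := by
    intro z w hz
    rw [hLag, EReal.coe_add, EReal.coe_add, EReal.coe_toReal hz (hnebot z)]
  -- d is everywhere < ⊤
  have hdterm : ∀ w z, d w ≤ h z + ((⟪w, A z - b⟫ : ℝ) : EReal) := by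
    intro w z; rw [hd]; exact iInf_le _ z
  have hdlt : ∀ w, d w < ⊤ := by
    intro w
    refine lt_of_le_of_lt (hdterm w xp) ?_
    rw [hxp', ← EReal.coe_add]
    exact EReal.coe_lt_top _
  -- a point where d is finite
  obtain ⟨w₀, hw₀⟩ : ∃ w₀, d w₀ ≠ ⊥ := by
    by_contra hc
    push_neg at hc
    have : (⨆ y, d y) ≤ ⊥ := iSup_le fun w => (hc w).le
    exact absurd hdbdd this.not_gt
  set dr₀ : ℝ := (d w₀).toReal with dr₀_def
  have hdw₀ : d w₀ = ((dr₀ : ℝ) : EReal) := (EReal.coe_toReal (hdlt w₀).ne hw₀).symm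
  -- real version of hdterm at finite h points
  have hdtermR : ∀ (w : EuclideanSpace ℝ (Fin m)) (wr : ℝ), d w = ((wr : ℝ) : EReal) →
      ∀ z, h z ≠ ⊤ → wr ≤ (h z).toReal + ⟪w, A z - b⟫ := by
    intro w wr hw z hz
    have := hdterm w z
    rw [hw, ← EReal.coe_toReal hz (hnebot z), ← EReal.coe_add] at this
    exact EReal.coe_le_coe_iff.mp this
  -- the infimum of the Lagrangian is a real number m k
  have hMlow : ∀ k : ℕ, ((dr₀ - ‖w₀ - y k‖^2 / (2*lam) : ℝ) : EReal) ≤ ⨅ z, Lag z (y k) := by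
    intro k
    refine le_iInf fun z => ?_
    by_cases hz : h z = ⊤
    · rw [hLagTop z _ hz]; exact le_top
    · rw [hLagR z _ hz]
      refine EReal.coe_le_coe_iff.mpr ?_
      have h1 : dr₀ ≤ (h z).toReal + ⟪w₀, A z - b⟫ := hdtermR w₀ dr₀ hdw₀ z hz
      have h2 : ⟪w₀ - y k, A z - b⟫ ≤ ‖w₀ - y k‖ * ‖A z - b‖ := real_inner_le_norm _ _
      have h3 : ⟪w₀ - y k, A z - b⟫ = ⟪w₀, A z - b⟫ - ⟪y k, A z - b⟫ := inner_sub_left _ _ _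
      have h4 := amgm hlam ‖w₀ - y k‖ ‖A z - b‖
      nlinarith
  have hMhigh : ∀ k : ℕ, (⨅ z, Lag z (y k)) ≤
      ((hp + ⟪y k, A xp - b⟫ + lam / 2 * ‖A xp - b‖ ^ 2 : ℝ) : EReal) := by
    intro k
    refine le_trans (iInf_le _ xp) ?_
    rw [hLagR xp _ hxp]
  have hmex : ∀ k : ℕ, ∃ r : ℝ, (⨅ z, Lag z (y k)) = ((r : ℝ) : EReal) := by
    intro k
    refine ⟨(⨅ z, Lag z (y k)).toReal, (EReal.coe_toReal ?_ ?_).symm⟩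
    · exact ne_top_of_le_ne_top (EReal.coe_lt_top _).ne (hMhigh k)
    · intro hbot
      have := hMlow k
      rw [hbot] at this
      exact (EReal.coe_ne_bot _) (le_bot_iff.mp this)
  choose mm hm using hmex
  have hmle : ∀ k, mm k ≤ hp + ⟪y k, A xp - b⟫ + lam / 2 * ‖A xp - b‖ ^ 2 := by
    intro k
    have h1 := hMhigh k; rw [hm k] at h1
    exact EReal.coe_le_coe_iff.mp h1
  -- the iterates have finite h-value
  have hxfin : ∀ k : ℕ, h (x (k+1)) ≠ ⊤ := by
    intro k hk
    have := hsub k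
    rw [hLagTop _ _ hk, hm k, EReal.top_sub_coe] at this
    exact (EReal.coe_lt_top _).not_ge this
  set L : ℕ → ℝ := fun k => (h (x (k+1))).toReal + ⟪y k, A (x (k+1)) - b⟫
      + lam / 2 * ‖A (x (k+1)) - b‖ ^ 2 with L_def
  have hLagL : ∀ k, Lag (x (k+1)) (y k) = ((L k : ℝ) : EReal) := fun k => hLagR _ _ (hxfin k)
  have hLsub : ∀ k, L k ≤ mm k + lam * ε (k+1) ^ 2 / 2 := by
    intro k
    have := hsub k
    rw [hLagL k, hm k, ← EReal.coe_sub] at this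
    have := EReal.coe_le_coe_iff.mp this
    linarith
  have hmL : ∀ k, mm k ≤ L k := by
    intro k
    have h1 : (⨅ z, Lag z (y k)) ≤ Lag (x (k+1)) (y k) := iInf_le _ _
    rw [hLagL k, hm k] at h1
    exact EReal.coe_le_coe_iff.mp h1
  -- the θ-interpolation inequality
  have hθlem : ∀ (k : ℕ) (θ : ℝ), 0 < θ → θ < 1 → ∀ z, h z ≠ ⊤ →
      θ * (mm k) ≤ (1-θ)*(lam * ε (k+1)^2/2)
        + θ*((h z).toReal + ⟪y k, A z - b⟫ + lam/2 * ‖A z - b‖^2)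
        - lam/2*(θ*(1-θ)*‖(A z - b) - (A (x (k+1)) - b)‖^2) := by
    intro k θ hθ hθ1 z hz
    have hcv := hconv (x (k+1)) z (1-θ) (by linarith) (by linarith)
    have e : (1:ℝ) - (1-θ) = θ := by ring
    rw [e] at hcv
    rw [← EReal.coe_toReal (hxfin k) (hnebot _), ← EReal.coe_toReal hz (hnebot z),
      ← EReal.coe_mul, ← EReal.coe_mul, ← EReal.coe_add] at hcv
    set xθ := (1-θ) • x (k+1) + θ • z with xθdef
    have hxθtop : h xθ ≠ ⊤ := ne_top_of_le_ne_top (EReal.coe_lt_top _).ne hcv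
    have hxθR : (h xθ).toReal ≤ (1-θ) * (h (x (k+1))).toReal + θ * (h z).toReal := by
      rw [← EReal.coe_le_coe_iff, EReal.coe_toReal hxθtop (hnebot _)]
      exact hcv
    have hAxθ : A xθ - b = (1-θ) • (A (x (k+1)) - b) + θ • (A z - b) := by
      rw [xθdef, map_add, map_smul, map_smul]; module
    have hinner : ⟪y k, A xθ - b⟫ = (1-θ) * ⟪y k, A (x (k+1)) - b⟫ + θ * ⟪y k, A z - b⟫ := by
      rw [hAxθ, inner_add_right, real_inner_smul_right, real_inner_smul_right]
    have hnorm : ‖A xθ - b‖^2 = (1-θ)*‖A (x (k+1)) - b‖^2 + θ*‖A z - b‖^2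
        - θ*(1-θ)*‖(A z - b) - (A (x (k+1)) - b)‖^2 := by
      rw [hAxθ]; exact norm_combo_sq θ _ _
    have hmlag : mm k ≤ (h xθ).toReal + ⟪y k, A xθ - b⟫ + lam/2 * ‖A xθ - b‖^2 := by
      have h1 : (⨅ w, Lag w (y k)) ≤ Lag xθ (y k) := iInf_le _ _
      rw [hm k, hLagR _ _ hxθtop] at h1
      exact EReal.coe_le_coe_iff.mp h1
    have hLs := hLsub k
    have hLk : L k = (h (x (k+1))).toReal + ⟪y k, A (x (k+1)) - b⟫
        + lam / 2 * ‖A (x (k+1)) - b‖ ^ 2 := rfl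
    rw [hLk] at hLs
    rw [hinner, hnorm] at hmlag
    have h1θ : (0:ℝ) ≤ 1-θ := by linarith
    have step1 : mm k ≤ (1-θ)*((h (x (k+1))).toReal + ⟪y k, A (x (k+1)) - b⟫
          + lam / 2 * ‖A (x (k+1)) - b‖ ^ 2)
        + θ*((h z).toReal + ⟪y k, A z - b⟫ + lam/2 * ‖A z - b‖^2)
        - lam/2*(θ*(1-θ)*‖A z - b - (A (x (k+1)) - b)‖^2) := by
      nlinarith [hmlag, hxθR]
    have step2 : (1-θ)*((h (x (k+1))).toReal + ⟪y k, A (x (k+1)) - b⟫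
          + lam / 2 * ‖A (x (k+1)) - b‖ ^ 2)
        ≤ (1-θ)*(mm k + lam * ε (k+1) ^ 2 / 2) := mul_le_mul_of_nonneg_left hLs h1θ
    linarith [step1, step2]
  -- sufficient increase of the dual proximal values
  have hinc : ∀ k : ℕ, mm k + lam * (1/4 - 1/μ^2) * ‖A (x (k+1)) - b‖^2 ≤ mm (k+1) := by
    intro k
    have hub : μ * ε (k+1) < ‖A (x (k+1)) - b‖ := by rw [norm_sub_rev]; exact hbig k
    rw [← EReal.coe_le_coe_iff, ← hm (k+1)]
    refine le_iInf fun z => ?_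
    by_cases hz : h z = ⊤
    · rw [hLagTop z _ hz]; exact le_top
    · rw [hLagR z _ hz]
      refine EReal.coe_le_coe_iff.mpr ?_
      have hθl := hθlem k (1/3) (by norm_num) (by norm_num) z hz
      have hθl' : mm k - 2*(lam * ε (k+1)^2/2) + lam/3*‖(A z - b) - (A (x (k+1)) - b)‖^2
          ≤ (h z).toReal + ⟪y k, A z - b⟫ + lam/2 * ‖A z - b‖^2 := by
        nlinarith [hθl]
      have hy1 : ⟪y (k+1), A z - b⟫ = ⟪y k, A z - b⟫ + lam * ⟪A (x (k+1)) - b, A z - b⟫ := by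
        rw [hiter k, inner_add_left, real_inner_smul_left]
      have hip : ⟪A (x (k+1)) - b, (A z - b) - (A (x (k+1)) - b)⟫
          = ⟪A (x (k+1)) - b, A z - b⟫ - ‖A (x (k+1)) - b‖^2 := by
        rw [inner_sub_right, real_inner_self_eq_norm_sq]
      have hcs : -(‖A (x (k+1)) - b‖ * ‖(A z - b) - (A (x (k+1)) - b)‖)
          ≤ ⟪A (x (k+1)) - b, (A z - b) - (A (x (k+1)) - b)⟫ := by
        have h1 := abs_real_inner_le_norm (A (x (k+1)) - b) ((A z - b) - (A (x (k+1)) - b))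
        have h2 := neg_abs_le (⟪A (x (k+1)) - b, (A z - b) - (A (x (k+1)) - b)⟫ : ℝ)
        linarith
      have hεb : 2*(lam * ε (k+1)^2/2)*μ^2 ≤ lam*‖A (x (k+1)) - b‖^2 := by
        have hμ0 : (0:ℝ) < μ := by linarith
        have hq2 : (μ*ε (k+1))^2 ≤ ‖A (x (k+1)) - b‖^2 := by
          nlinarith [mul_pos hμ0 (hε (k+1)), hub]
        have := mul_le_mul_of_nonneg_left hq2 hlam.le
        nlinarith [this]
      have ht : ‖A (x (k+1)) - b‖^2 - ‖A (x (k+1)) - b‖ * ‖(A z - b) - (A (x (k+1)) - b)‖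
          ≤ ⟪A (x (k+1)) - b, A z - b⟫ := by
        linarith [hip, hcs]
      have := key_ineq_s18 hlam hμ hθl' hεb ht
      rw [hy1]
      linarith
  have hμ0 : (0:ℝ) < μ := by linarith
  have hc0 : 0 < lam * (1/4 - 1/μ^2) := by
    have h4 : (4:ℝ) < μ^2 := by nlinarith
    have h5 : 1/μ^2 < 1/4 := by
      rw [div_lt_div_iff₀ (by positivity) (by norm_num)]
      linarith
    nlinarith
  have hmono : Monotone mm := monotone_nat_of_le_succ fun k => by
    nlinarith [hinc k, mul_nonneg hc0.le (sq_nonneg ‖A (x (k+1)) - b‖)]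
  have htend_ub : Tendsto (fun j => hp + ⟪y (φ j), A xp - b⟫ + lam / 2 * ‖A xp - b‖ ^ 2) atTop
      (𝓝 (hp + ⟪ybar, A xp - b⟫ + lam / 2 * ‖A xp - b‖ ^ 2)) := by
    refine Tendsto.add (Tendsto.add tendsto_const_nhds ?_) tendsto_const_nhds
    exact ((Continuous.inner continuous_id continuous_const).tendsto ybar).comp hφt
  obtain ⟨C, hC⟩ := htend_ub.bddAbove_range
  have hmub : ∀ k, mm k ≤ C := by
    intro k
    calc mm k ≤ mm (φ k) := hmono hφ.le_apply
    _ ≤ hp + ⟪y (φ k), A xp - b⟫ + lam / 2 * ‖A xp - b‖ ^ 2 := hmle (φ k)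
    _ ≤ C := hC ⟨k, rfl⟩
  have hbddm : BddAbove (Set.range mm) := ⟨C, by rintro r ⟨k, rfl⟩; exact hmub k⟩
  have hmM : Tendsto mm atTop (𝓝 (⨆ k, mm k)) := tendsto_atTop_ciSup hmono hbddm
  set M : ℝ := ⨆ k, mm k with M_def
  have hmleM : ∀ k, mm k ≤ M := fun k => le_ciSup hbddm k
  have hdiff0 : Tendsto (fun k => mm (k+1) - mm k) atTop (𝓝 0) := by
    have h1 : Tendsto (fun k => mm (k+1)) atTop (𝓝 M) := (tendsto_add_atTop_iff_nat 1).mpr hmM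
    simpa using h1.sub hmM
  have hnsq : Tendsto (fun k => ‖A (x (k+1)) - b‖^2) atTop (𝓝 0) := by
    refine squeeze_zero (g := fun k => (mm (k+1) - mm k) / (lam * (1/4 - 1/μ^2)))
      (fun k => sq_nonneg _) (fun k => ?_) ?_
    · rw [le_div_iff₀ hc0]
      nlinarith [hinc k]
    · have t0 := hdiff0.div_const (lam * (1/4 - 1/μ^2))
      rw [zero_div] at t0
      exact t0
  have hn0 : Tendsto (fun k => ‖A (x (k+1)) - b‖) atTop (𝓝 0) := by
    have h1 : Tendsto (fun k => Real.sqrt (‖A (x (k+1)) - b‖^2)) atTop (𝓝 (Real.sqrt 0)) :=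
      (Real.continuous_sqrt.tendsto 0).comp hnsq
    simp only [Real.sqrt_zero] at h1
    convert h1 using 2 with k
    rw [Real.sqrt_sq (norm_nonneg _)]
  have hu0 : Tendsto (fun k => A (x (k+1)) - b) atTop (𝓝 0) := by
    rw [tendsto_zero_iff_norm_tendsto_zero]; exact hn0
  have hAx : Tendsto (fun k => A (x k) - b) atTop (𝓝 0) := by
    refine (tendsto_add_atTop_iff_nat 1).mp ?_
    exact hu0
  have hε0 : Tendsto ε atTop (𝓝 0) := by
    refine (tendsto_add_atTop_iff_nat 1).mp ?_
    refine squeeze_zero (g := fun k => ‖A (x (k+1)) - b‖ / μ)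
      (fun k => (hε (k+1)).le) (fun k => ?_) ?_
    · rw [le_div_iff₀ hμ0]
      have hb := hbig k
      rw [norm_sub_rev] at hb
      linarith
    · have t0 := hn0.div_const μ
      rw [zero_div] at t0
      exact t0
  -- subsequence limits
  have hφatTop : Tendsto φ atTop atTop := hφ.tendsto_atTop
  have hmφ : Tendsto (fun j => mm (φ j)) atTop (𝓝 M) := hmM.comp hφatTop
  have hnφ : Tendsto (fun j => ‖A (x (φ j + 1)) - b‖) atTop (𝓝 0) := hn0.comp hφatTop
  have hεφ : Tendsto (fun j => ε (φ j + 1)) atTop (𝓝 0) := by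
    have h1 : Tendsto (fun k => ε (k + 1)) atTop (𝓝 0) := (tendsto_add_atTop_iff_nat 1).mpr hε0
    exact h1.comp hφatTop
  have hgφ : Tendsto (fun j => ‖ybar - y (φ j)‖) atTop (𝓝 0) := by
    have h1 : Tendsto (fun j => ybar - y (φ j)) atTop (𝓝 0) := by
      have := (tendsto_const_nhds (α := ℕ) (x := ybar) (f := atTop)).sub hφt
      simpa using this
    exact tendsto_zero_iff_norm_tendsto_zero.mp h1
  -- d ybar ≥ M
  have hdyM : ((M : ℝ) : EReal) ≤ d ybar := by
    rw [hd]
    refine le_iInf fun z => ?_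
    by_cases hz : h z = ⊤
    · rw [hz, EReal.top_add_coe]; exact le_top
    · rw [← EReal.coe_toReal hz (hnebot z), ← EReal.coe_add]
      refine EReal.coe_le_coe_iff.mpr ?_
      refine le_of_forall_pos_le_add fun η hη => ?_
      set T : ℝ := (h z).toReal + ⟪ybar, A z - b⟫ with Tdef
      set θ : ℝ := min (1/2) (η / (lam/2 * ‖A z - b‖^2 + 1)) with θdef
      have hθpos : 0 < θ := lt_min (by norm_num) (by positivity)
      have hθlt : θ < 1 := lt_of_le_of_lt (min_le_left _ _) (by norm_num)
      have hθη : lam/2 * ‖A z - b‖^2 * θ ≤ η := by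
        have h1 : θ ≤ η / (lam/2 * ‖A z - b‖^2 + 1) := min_le_right _ _
        have h2 : (0:ℝ) < lam/2 * ‖A z - b‖^2 + 1 := by positivity
        rw [le_div_iff₀ h2] at h1
        nlinarith [mul_nonneg (by positivity : (0:ℝ) ≤ lam/2 * ‖A z - b‖^2) hθpos.le]
      have hbound : ∀ j, θ*mm (φ j) - (1-θ)*(lam/2)*(ε (φ j + 1))^2
          - (lam*θ*(1-θ)*‖A z - b‖)*‖A (x (φ j + 1)) - b‖ - (θ*‖A z - b‖)*‖ybar - y (φ j)‖
          - θ*θ*(lam/2*‖A z - b‖^2) ≤ θ * T := by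
        intro j
        have hθl := hθlem (φ j) θ hθpos hθlt z hz
        have e1 : -(‖ybar - y (φ j)‖*‖A z - b‖) ≤ ⟪ybar - y (φ j), A z - b⟫ := by
          have h1 := abs_real_inner_le_norm (ybar - y (φ j)) (A z - b)
          have h2 := neg_abs_le (⟪ybar - y (φ j), A z - b⟫ : ℝ)
          linarith
        have e2 : ⟪ybar - y (φ j), A z - b⟫ = ⟪ybar, A z - b⟫ - ⟪y (φ j), A z - b⟫ :=
          inner_sub_left _ _ _
        have e3 : ‖A z - b‖^2 - 2*‖A z - b‖*‖A (x (φ j + 1)) - b‖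
            ≤ ‖(A z - b) - (A (x (φ j + 1)) - b)‖^2 := by
          conv_rhs => rw [norm_sub_sq_real]
          nlinarith [real_inner_le_norm (A z - b) (A (x (φ j + 1)) - b),
            sq_nonneg ‖A (x (φ j + 1)) - b‖]
        have e3' := mul_le_mul_of_nonneg_left e3
          (mul_nonneg (by positivity : (0:ℝ) ≤ lam/2)
            (mul_nonneg hθpos.le (by linarith : (0:ℝ) ≤ 1-θ)))
        have e1' := mul_le_mul_of_nonneg_left e1 hθpos.le
        have e2' := congrArg (fun r => θ*r) e2
        rw [Tdef]
        linarith [hθl, e1', e2', e3']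
      have hRlim : Tendsto (fun j => θ*mm (φ j) - (1-θ)*(lam/2)*(ε (φ j + 1))^2
          - (lam*θ*(1-θ)*‖A z - b‖)*‖A (x (φ j + 1)) - b‖ - (θ*‖A z - b‖)*‖ybar - y (φ j)‖
          - θ*θ*(lam/2*‖A z - b‖^2)) atTop
          (𝓝 (θ*M - 0 - 0 - 0 - θ*θ*(lam/2*‖A z - b‖^2))) := by
        refine Tendsto.sub (Tendsto.sub (Tendsto.sub (Tendsto.sub (hmφ.const_mul θ) ?_) ?_) ?_)
          tendsto_const_nhds
        · have := (hεφ.mul hεφ).const_mul ((1-θ)*(lam/2))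
          simpa [pow_two, mul_assoc] using this
        · simpa using hnφ.const_mul (lam*θ*(1-θ)*‖A z - b‖)
        · simpa using hgφ.const_mul (θ*‖A z - b‖)
      have hlim_le : θ*M - 0 - 0 - 0 - θ*θ*(lam/2*‖A z - b‖^2) ≤ θ*T :=
        le_of_tendsto' hRlim hbound
      have h6 : θ*(M - lam/2*‖A z - b‖^2*θ) ≤ θ*T := by linarith [hlim_le]
      have h7 := (mul_le_mul_iff_right₀ hθpos).mp h6
      linarith [hθη]
  -- per-k upper bound on d
  have hdk : ∀ (w : EuclideanSpace ℝ (Fin m)) (k : ℕ),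
      d w ≤ ((mm k + ‖w - y k‖^2/(2*lam) : ℝ) : EReal) := by
    intro w k
    by_contra hcon
    push_neg at hcon
    have hwne : d w ≠ ⊥ := by
      intro hb
      rw [hb] at hcon
      exact not_lt_bot hcon
    have hdw : d w = (((d w).toReal : ℝ) : EReal) := (EReal.coe_toReal (hdlt w).ne hwne).symm
    set dr : ℝ := (d w).toReal with drdef
    have hBdr : mm k + ‖w - y k‖^2/(2*lam) < dr := by
      rw [hdw] at hcon
      exact EReal.coe_lt_coe_iff.mp hcon
    have hlow : ((dr - ‖w - y k‖^2/(2*lam) : ℝ) : EReal) ≤ ⨅ z, Lag z (y k) := by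
      refine le_iInf fun z => ?_
      by_cases hz : h z = ⊤
      · rw [hLagTop z _ hz]; exact le_top
      · rw [hLagR z _ hz]
        refine EReal.coe_le_coe_iff.mpr ?_
        have h1 : dr ≤ (h z).toReal + ⟪w, A z - b⟫ := hdtermR w dr hdw z hz
        have h2 : ⟪w - y k, A z - b⟫ ≤ ‖w - y k‖ * ‖A z - b‖ := real_inner_le_norm _ _
        have h3 : ⟪w - y k, A z - b⟫ = ⟪w, A z - b⟫ - ⟪y k, A z - b⟫ := inner_sub_left _ _ _
        have h4 := amgm hlam ‖w - y k‖ ‖A z - b‖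
        nlinarith
    rw [hm k] at hlow
    have := EReal.coe_le_coe_iff.mp hlow
    linarith
  -- limit version
  have hdwM : ∀ w, d w ≤ ((M + ‖w - ybar‖^2/(2*lam) : ℝ) : EReal) := by
    intro w
    by_cases hb : d w = ⊥
    · rw [hb]; exact bot_le
    have hdw : d w = (((d w).toReal : ℝ) : EReal) := (EReal.coe_toReal (hdlt w).ne hb).symm
    set dr : ℝ := (d w).toReal with drdef
    rw [hdw]
    refine EReal.coe_le_coe_iff.mpr ?_
    have hseq : ∀ j, dr ≤ mm (φ j) + ‖w - y (φ j)‖^2/(2*lam) := by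
      intro j
      have h5 := hdk w (φ j)
      rw [hdw] at h5
      exact EReal.coe_le_coe_iff.mp h5
    have hlim : Tendsto (fun j => mm (φ j) + ‖w - y (φ j)‖^2/(2*lam)) atTop
        (𝓝 (M + ‖w - ybar‖^2/(2*lam))) := by
      refine hmφ.add ?_
      have h1 : Tendsto (fun j => w - y (φ j)) atTop (𝓝 (w - ybar)) :=
        tendsto_const_nhds.sub hφt
      exact ((h1.norm.pow 2)).div_const (2*lam)
    exact ge_of_tendsto' hlim hseq
  -- d ybar is finite
  have hdyne : d ybar ≠ ⊥ := by
    intro hb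
    rw [hb] at hdyM
    exact (EReal.coe_ne_bot M) (le_bot_iff.mp hdyM)
  have hdy : d ybar = (((d ybar).toReal : ℝ) : EReal) :=
    (EReal.coe_toReal (hdlt ybar).ne hdyne).symm
  set dy : ℝ := (d ybar).toReal with dydef
  have hMdy : M ≤ dy := by
    rw [hdy] at hdyM
    exact EReal.coe_le_coe_iff.mp hdyM
  refine ⟨?_, hε0, hAx⟩
  intro w
  by_cases hb : d w = ⊥
  · rw [hb]; exact bot_le
  have hdw : d w = (((d w).toReal : ℝ) : EReal) := (EReal.coe_toReal (hdlt w).ne hb).symm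
  set dr : ℝ := (d w).toReal with drdef
  rw [hdw, hdy]
  refine EReal.coe_le_coe_iff.mpr ?_
  refine le_of_forall_pos_le_add fun η hη => ?_
  have hK0 : (0:ℝ) ≤ ‖w - ybar‖^2/(2*lam) := by positivity
  set K : ℝ := ‖w - ybar‖^2/(2*lam) with Kdef
  set t : ℝ := min (1/2) (η/(K+1)) with tdef
  have ht0 : 0 < t := lt_min (by norm_num) (by positivity)
  have ht1 : t < 1 := lt_of_le_of_lt (min_le_left _ _) (by norm_num)
  have htK : t*K ≤ η := by
    have h1 : t ≤ η/(K+1) := min_le_right _ _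
    have h2 : (0:ℝ) < K+1 := by linarith
    rw [le_div_iff₀ h2] at h1
    nlinarith [mul_nonneg hK0 ht0.le]
  have hconc : ((t*dr + (1-t)*dy : ℝ) : EReal) ≤ d (ybar + t • (w - ybar)) := by
    rw [hd]
    refine le_iInf fun z => ?_
    by_cases hz : h z = ⊤
    · rw [hz, EReal.top_add_coe]; exact le_top
    · rw [← EReal.coe_toReal hz (hnebot z), ← EReal.coe_add]
      refine EReal.coe_le_coe_iff.mpr ?_
      have h1 : dr ≤ (h z).toReal + ⟪w, A z - b⟫ := hdtermR w dr hdw z hz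
      have h2 : dy ≤ (h z).toReal + ⟪ybar, A z - b⟫ := hdtermR ybar dy hdy z hz
      have h3 : ⟪ybar + t • (w - ybar), A z - b⟫
          = ⟪ybar, A z - b⟫ + t*(⟪w, A z - b⟫ - ⟪ybar, A z - b⟫) := by
        rw [inner_add_left, real_inner_smul_left, inner_sub_left]
      have h1' := mul_le_mul_of_nonneg_left h1 ht0.le
      have h2' := mul_le_mul_of_nonneg_left h2 (by linarith : (0:ℝ) ≤ 1-t)
      linarith [h1', h2', h3]
  have henv : d (ybar + t • (w - ybar)) ≤ ((M + t^2*K : ℝ) : EReal) := by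
    have h5 := hdwM (ybar + t • (w - ybar))
    have hwt : ‖(ybar + t • (w - ybar)) - ybar‖^2/(2*lam) = t^2*K := by
      have he : (ybar + t • (w - ybar)) - ybar = t • (w - ybar) := by abel
      rw [he, norm_smul, Real.norm_eq_abs, mul_pow, sq_abs, Kdef]
      ring
    rwa [hwt] at h5
  have hcomb : t*dr + (1-t)*dy ≤ M + t^2*K := EReal.coe_le_coe_iff.mp (hconc.trans henv)
  have h8 : t*dr ≤ t*(dy + t*K) := by nlinarith [hcomb, hMdy]
  have h9 := (mul_le_mul_iff_right₀ ht0).mp h8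
  linarith [htK]
end

section
/- Let h : ℝⁿ → (−∞, ∞] be a proper, lower semicontinuous, convex function, A ∈ ℝ^{m×n}, b ∈ ℝᵐ with the feasible set {x : Ax = b} nonempty, λ > 0, μ > 2, and let d(y) := inf_{x∈ℝⁿ} { h(x) + ⟨y, Ax − b⟩ } satisfy sup_{y∈ℝᵐ} d(y) > −∞. Let {x^k} ⊂ ℝⁿ, {y^k} ⊂ ℝᵐ, and positive reals {ε_k} satisfy, for all k: L_λ(x^{k+1}, y^k) − inf_{x∈ℝⁿ} L_λ(x, y^k) ≤ λ ε_{k+1}²/2, ‖b − Ax^{k+1}‖ > μ ε_{k+1}, and y^{k+1} = y^k + λ(Ax^{k+1} − b), where no y^k maximizes d over ℝᵐ. If the sequence {y^k} is bounded, then every accumulation point x̄ of {x^k} is an optimal solution of the primal problem: A x̄ = b and h(x̄) ≤ h(x) for every x ∈ ℝⁿ with Ax = b. -/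
open Filter Topology
open scoped RealInnerProductSpace

private lemma gialm_norm_combo_sq {N : ℕ} (u w : EuclideanSpace ℝ (Fin N)) (a bb : ℝ) :
    ‖a • u + bb • w‖^2 = a^2*‖u‖^2 + 2*a*bb*⟪u,w⟫ + bb^2*‖w‖^2 := by
  rw [← real_inner_self_eq_norm_sq, ← real_inner_self_eq_norm_sq, ← real_inner_self_eq_norm_sq,
    inner_add_add_self]
  simp only [real_inner_smul_left, real_inner_smul_right, real_inner_comm w u]
  ring

set_option maxHeartbeats 2000000 in
/-- GIALM: if the dual iterates {y^k} are bounded, then every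
accumulation point of the primal iterates {x^k} is an optimal solution of the
primal problem minimize h(x) subject to Ax = b. -/
theorem GIALM_primal_convergence {n m : ℕ}
    (h : EuclideanSpace ℝ (Fin n) → EReal)
    (hproper : ∃ x, h x ≠ ⊤) (hnebot : ∀ x, h x ≠ ⊥)
    (hlsc : LowerSemicontinuous h)
    (hconv : ∀ u v : EuclideanSpace ℝ (Fin n), ∀ t : ℝ, 0 ≤ t → t ≤ 1 →
      h (t • u + (1 - t) • v) ≤ (t : EReal) * h u + ((1 - t : ℝ) : EReal) * h v)
    (A : EuclideanSpace ℝ (Fin n) →L[ℝ] EuclideanSpace ℝ (Fin m))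
    (b : EuclideanSpace ℝ (Fin m)) (hfeas : ∃ x, A x = b)
    (lam μ : ℝ) (hlam : 0 < lam) (hμ : 2 < μ)
    (Lag : EuclideanSpace ℝ (Fin n) → EuclideanSpace ℝ (Fin m) → EReal)
    (hLag : ∀ x y, Lag x y =
      h x + ((⟪y, A x - b⟫ : ℝ) : EReal) + ((lam / 2 * ‖A x - b‖ ^ 2 : ℝ) : EReal))
    (d : EuclideanSpace ℝ (Fin m) → EReal)
    (hd : ∀ y, d y = ⨅ x, (h x + ((⟪y, A x - b⟫ : ℝ) : EReal)))
    (hdbdd : ⊥ < ⨆ y, d y)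
    (x : ℕ → EuclideanSpace ℝ (Fin n)) (y : ℕ → EuclideanSpace ℝ (Fin m))
    (ε : ℕ → ℝ) (hε : ∀ k : ℕ, 0 < ε k)
    (hsub : ∀ k : ℕ, Lag (x (k + 1)) (y k) - (⨅ z, Lag z (y k)) ≤
      ((lam * ε (k + 1) ^ 2 / 2 : ℝ) : EReal))
    (hbig : ∀ k : ℕ, μ * ε (k + 1) < ‖b - A (x (k + 1))‖)
    (hiter : ∀ k : ℕ, y (k + 1) = y k + lam • (A (x (k + 1)) - b))
    (hnotmax : ∀ k : ℕ, ∃ w, d (y k) < d w)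
    (hbdd : ∃ C : ℝ, ∀ k : ℕ, ‖y k‖ ≤ C)
    (xbar : EuclideanSpace ℝ (Fin n))
    (hacc : ∃ φ : ℕ → ℕ, StrictMono φ ∧ Tendsto (fun k => x (φ k)) atTop (𝓝 xbar)) :
    A xbar = b ∧ ∀ x' : EuclideanSpace ℝ (Fin n), A x' = b → h xbar ≤ h x' := by
  obtain ⟨x0, hx0top⟩ := hproper
  obtain ⟨C, hC⟩ := hbdd
  have hC0 : 0 ≤ C := le_trans (norm_nonneg _) (hC 0)
  have hμ0 : 0 < μ := by linarith
  -- real form of Lag when h is finite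
  have hLagR : ∀ (z : EuclideanSpace ℝ (Fin n)) (y' : EuclideanSpace ℝ (Fin m)) (r : ℝ),
      h z = (r : EReal) →
      Lag z y' = ((r + ⟪y', A z - b⟫ + lam / 2 * ‖A z - b‖ ^ 2 : ℝ) : EReal) := by
    intro z y' r hr
    rw [hLag, hr]
    norm_cast
  have hLagTop : ∀ (z : EuclideanSpace ℝ (Fin n)) (y' : EuclideanSpace ℝ (Fin m)),
      h z = ⊤ → Lag z y' = ⊤ := by
    intro z y' hz
    rw [hLag, hz, EReal.top_add_of_ne_bot (EReal.coe_ne_bot _),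
      EReal.top_add_of_ne_bot (EReal.coe_ne_bot _)]
  have hLagBot : ∀ (z : EuclideanSpace ℝ (Fin n)) (y' : EuclideanSpace ℝ (Fin m)),
      Lag z y' ≠ ⊥ := by
    intro z y'
    by_cases hz : h z = ⊤
    · rw [hLagTop z y' hz]; simp
    · obtain ⟨r, hr⟩ : ∃ r : ℝ, h z = (r : EReal) :=
        ⟨(h z).toReal, (EReal.coe_toReal hz (hnebot z)).symm⟩
      rw [hLagR z y' r hr]; exact EReal.coe_ne_bot _
  have hx0r : h x0 = (((h x0).toReal : ℝ) : EReal) := (EReal.coe_toReal hx0top (hnebot x0)).symm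
  set H0 : ℝ := (h x0).toReal with hH0def
  -- the infimum values are real
  have hβne : ∀ k : ℕ, ∃ Bk : ℝ, (⨅ z, Lag z (y k)) = (Bk : EReal) := by
    intro k
    have hnetop : (⨅ z, Lag z (y k)) ≠ ⊤ := by
      have h1 : (⨅ z, Lag z (y k)) ≤ Lag x0 (y k) := iInf_le _ _
      rw [hLagR x0 (y k) H0 hx0r] at h1
      exact ne_top_of_le_ne_top (EReal.coe_ne_top _) h1
    have hnebot' : (⨅ z, Lag z (y k)) ≠ ⊥ := by
      intro hbot
      have h1 := hsub k
      rw [hbot] at h1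
      rw [sub_eq_add_neg] at h1
      simp only [EReal.neg_bot] at h1
      rw [EReal.add_top_of_ne_bot (hLagBot _ _)] at h1
      exact (EReal.coe_lt_top _).not_ge h1
    exact ⟨_, (EReal.coe_toReal hnetop hnebot').symm⟩
  choose B hB using hβne
  -- h is finite at the iterates
  have hxfin : ∀ k : ℕ, ∃ Hk : ℝ, h (x (k + 1)) = (Hk : EReal) := by
    intro k
    by_cases hz : h (x (k + 1)) = ⊤
    · exfalso
      have h1 := hsub k
      rw [hB k, hLagTop _ _ hz, EReal.top_sub_coe] at h1
      exact (EReal.coe_lt_top _).not_ge h1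
    · exact ⟨(h (x (k + 1))).toReal, (EReal.coe_toReal hz (hnebot _)).symm⟩
  choose H hH using hxfin
  -- real form of the subgradient condition
  have hsubR : ∀ k : ℕ,
      H k + ⟪y k, A (x (k + 1)) - b⟫ + lam / 2 * ‖A (x (k + 1)) - b‖ ^ 2 ≤
        B k + lam * ε (k + 1) ^ 2 / 2 := by
    intro k
    have h1 := hsub k
    rw [hB k, hLagR _ _ _ (hH k)] at h1
    rw [EReal.sub_le_iff_le_add (Or.inl (EReal.coe_ne_bot _))
      (Or.inl (EReal.coe_ne_top _))] at h1
    have h2 : H k + ⟪y k, A (x (k + 1)) - b⟫ + lam / 2 * ‖A (x (k + 1)) - b‖ ^ 2 ≤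
        lam * ε (k + 1) ^ 2 / 2 + B k := by exact_mod_cast h1
    linarith
  -- lower bound of B against any point with finite value
  have hBle : ∀ (k : ℕ) (z : EuclideanSpace ℝ (Fin n)) (r : ℝ), h z = (r : EReal) →
      B k ≤ r + ⟪y k, A z - b⟫ + lam / 2 * ‖A z - b‖ ^ 2 := by
    intro k z r hz
    have h1 : (⨅ z', Lag z' (y k)) ≤ Lag z (y k) := iInf_le _ _
    rw [hB k, hLagR z (y k) r hz] at h1
    exact_mod_cast h1
  -- upper bound for B
  have hBub : ∀ k : ℕ, B k ≤ H0 + C * ‖A x0 - b‖ + lam / 2 * ‖A x0 - b‖ ^ 2 := by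
    intro k
    have h1 := hBle k x0 H0 hx0r
    have h2 : ⟪y k, A x0 - b⟫ ≤ C * ‖A x0 - b‖ :=
      le_trans (real_inner_le_norm _ _) (mul_le_mul_of_nonneg_right (hC k) (norm_nonneg _))
    linarith
  -- the strict error bound in squared form
  have he2 : ∀ k : ℕ, ε (k + 1) ^ 2 < ‖A (x (k + 1)) - b‖ ^ 2 / μ ^ 2 := by
    intro k
    have hb := hbig k
    rw [norm_sub_rev] at hb
    rw [lt_div_iff₀ (pow_pos hμ0 2)]
    have h2 := mul_lt_mul'' hb hb (mul_pos hμ0 (hε (k + 1))).le (mul_pos hμ0 (hε (k + 1))).le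
    nlinarith [norm_nonneg (A (x (k + 1)) - b)]
  -- KEY dual ascent inequality
  have hkey : ∀ k : ℕ,
      B k + lam / 4 * ‖A (x (k + 1)) - b‖ ^ 2 - lam * ε (k + 1) ^ 2 ≤ B (k + 1) := by
    intro k
    have hle : ((B k + lam / 4 * ‖A (x (k + 1)) - b‖ ^ 2 - lam * ε (k + 1) ^ 2 : ℝ) : EReal) ≤
        ⨅ z, Lag z (y (k + 1)) := by
      apply le_iInf
      intro z
      by_cases hzt : h z = ⊤
      · rw [hLagTop z _ hzt]; exact le_top
      obtain ⟨r, hr⟩ : ∃ r : ℝ, h z = (r : EReal) :=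
        ⟨(h z).toReal, (EReal.coe_toReal hzt (hnebot z)).symm⟩
      rw [hLagR z _ r hr]
      rw [EReal.coe_le_coe_iff]
      -- abbreviations
      set u := A z - b with hu
      set w := A (x (k + 1)) - b with hw
      set e := ε (k + 1) with he
      -- convexity at t = 1/3
      set zm := (1/3 : ℝ) • z + (1 - 1/3 : ℝ) • x (k + 1) with hzm
      have hcm := hconv z (x (k + 1)) (1/3) (by norm_num) (by norm_num)
      rw [hr, hH k] at hcm
      have hcm' : h zm ≤ (((1/3) * r + (1 - 1/3) * H k : ℝ) : EReal) := by
        rw [hzm]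
        exact_mod_cast hcm
      have hzmtop : h zm ≠ ⊤ := ne_top_of_le_ne_top (EReal.coe_ne_top _) hcm'
      obtain ⟨rm, hrm⟩ : ∃ rm : ℝ, h zm = (rm : EReal) :=
        ⟨(h zm).toReal, (EReal.coe_toReal hzmtop (hnebot zm)).symm⟩
      have hrmle : rm ≤ (1/3) * r + (1 - 1/3) * H k := by
        rw [hrm] at hcm'; exact_mod_cast hcm'
      -- A zm - b
      have hAzm : A zm - b = (1/3 : ℝ) • u + (1 - 1/3 : ℝ) • w := by
        rw [hzm, map_add, map_smul, map_smul, hu, hw]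
        module
      have hBzm := hBle k zm rm hrm
      rw [hAzm] at hBzm
      rw [inner_add_right, real_inner_smul_right, real_inner_smul_right,
        gialm_norm_combo_sq u w (1/3) (1 - 1/3)] at hBzm
      -- subgradient condition
      have hsk := hsubR k
      rw [← hw, ← he] at hsk
      -- the positivity fact : ‖u + (1/2) w‖² ≥ 0
      have hq : 0 ≤ ‖u‖ ^ 2 + ⟪u, w⟫ + ‖w‖ ^ 2 / 4 := by
        have h1 := sq_nonneg ‖(1 : ℝ) • u + (1/2 : ℝ) • w‖
        rw [gialm_norm_combo_sq u w 1 (1/2)] at h1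
        linarith
      have hq' : 0 ≤ lam * (‖u‖ ^ 2 + ⟪u, w⟫ + ‖w‖ ^ 2 / 4) := mul_nonneg hlam.le hq
      -- the new multiplier inner product
      rw [hiter k, ← hw]
      rw [inner_add_left, real_inner_smul_left, real_inner_comm u w]
      -- final real arithmetic
      nlinarith [hBzm, hsk, hq', hrmle]
    rw [hB (k + 1)] at hle
    exact_mod_cast hle
  -- positive gain constant
  set c : ℝ := lam * (1/4 - 1/μ^2) with hcdef
  have hμ4 : 4 < μ ^ 2 := by nlinarith
  have hc : 0 < c := by
    have : 1 / μ ^ 2 < 1 / 4 := by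
      rw [div_lt_div_iff₀ (by positivity) (by norm_num)]; linarith
    have h14 : 0 < 1/4 - 1/μ^2 := by linarith
    exact mul_pos hlam h14
  have hstep : ∀ k : ℕ, B k + c * ‖A (x (k + 1)) - b‖ ^ 2 ≤ B (k + 1) := by
    intro k
    have h1 := hkey k
    have h2 := he2 k
    have h3 : lam * ε (k + 1) ^ 2 ≤ lam * (‖A (x (k + 1)) - b‖ ^ 2 / μ ^ 2) :=
      mul_le_mul_of_nonneg_left h2.le hlam.le
    have h4 : lam * (‖A (x (k + 1)) - b‖ ^ 2 / μ ^ 2) = lam / μ ^ 2 * ‖A (x (k + 1)) - b‖ ^ 2 := by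
      ring
    rw [h4] at h3
    have h5 : c * ‖A (x (k + 1)) - b‖ ^ 2 =
        lam / 4 * ‖A (x (k + 1)) - b‖ ^ 2 - lam / μ ^ 2 * ‖A (x (k + 1)) - b‖ ^ 2 := by
      rw [hcdef]; ring
    linarith
  -- B is monotone and bounded above, hence convergent
  have hmono : Monotone B := by
    apply monotone_nat_of_le_succ
    intro k
    have h1 := hstep k
    have h2 : 0 ≤ c * ‖A (x (k + 1)) - b‖ ^ 2 := by positivity
    linarith
  have hbddB : BddAbove (Set.range B) := by
    refine ⟨H0 + C * ‖A x0 - b‖ + lam / 2 * ‖A x0 - b‖ ^ 2, ?_⟩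
    rintro _ ⟨k, rfl⟩
    exact hBub k
  have hBconv : Tendsto B atTop (𝓝 (⨆ k, B k)) := tendsto_atTop_ciSup hmono hbddB
  have hBdiff : Tendsto (fun k => B (k + 1) - B k) atTop (𝓝 0) := by
    have h2 : Tendsto (fun k => B (k + 1)) atTop (𝓝 (⨆ k, B k)) :=
      hBconv.comp (tendsto_add_atTop_nat 1)
    simpa using h2.sub hBconv
  -- ‖A x^{k+1} - b‖² → 0
  have hsq : Tendsto (fun k => ‖A (x (k + 1)) - b‖ ^ 2) atTop (𝓝 0) := by
    apply squeeze_zero (fun k => by positivity)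
      (g := fun k => (B (k + 1) - B k) / c)
    · intro k
      rw [le_div_iff₀ hc]
      nlinarith [hstep k]
    · simpa using hBdiff.div_const c
  have hnorm : Tendsto (fun k => ‖A (x (k + 1)) - b‖) atTop (𝓝 0) := by
    have h1 := (Real.continuous_sqrt.tendsto 0).comp hsq
    simpa [Function.comp_def, Real.sqrt_sq (norm_nonneg _)] using h1
  have hw0 : Tendsto (fun k => A (x (k + 1)) - b) atTop (𝓝 0) :=
    tendsto_zero_iff_norm_tendsto_zero.mpr hnorm
  have hAx : Tendsto (fun k => A (x k) - b) atTop (𝓝 0) :=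
    (tendsto_add_atTop_iff_nat 1).mp hw0
  obtain ⟨φ, hφ, hxφ⟩ := hacc
  -- Part (a): A xbar = b
  have hsub1 : Tendsto (fun j => A (x (φ j)) - b) atTop (𝓝 0) :=
    hAx.comp hφ.tendsto_atTop
  have hsub2 : Tendsto (fun j => A (x (φ j)) - b) atTop (𝓝 (A xbar - b)) := by
    have h1 : Tendsto (fun j => A (x (φ j))) atTop (𝓝 (A xbar)) :=
      (A.continuous.tendsto xbar).comp hxφ
    exact h1.sub tendsto_const_nhds
  have hab : A xbar = b := by
    have := tendsto_nhds_unique hsub2 hsub1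
    rwa [sub_eq_zero] at this
  refine ⟨hab, ?_⟩
  -- Part (b): optimality
  intro x' hx'
  by_cases hx't : h x' = ⊤
  · rw [hx't]; exact le_top
  obtain ⟨a, ha⟩ : ∃ a : ℝ, h x' = (a : EReal) :=
    ⟨(h x').toReal, (EReal.coe_toReal hx't (hnebot x')).symm⟩
  have hAx'0 : A x' - b = 0 := sub_eq_zero.mpr hx'
  have hBlea : ∀ k : ℕ, B k ≤ a := by
    intro k
    have h1 := hBle k x' a ha
    rw [hAx'0] at h1
    simpa using h1
  -- bound on H k
  have hHle : ∀ k : ℕ, H k ≤ a + (lam / (2 * μ ^ 2) * ‖A (x (k + 1)) - b‖ ^ 2 +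
      C * ‖A (x (k + 1)) - b‖) := by
    intro k
    have h1 := hsubR k
    have h2 := hBlea k
    have h3 : lam * ε (k + 1) ^ 2 ≤ lam * (‖A (x (k + 1)) - b‖ ^ 2 / μ ^ 2) :=
      mul_le_mul_of_nonneg_left (he2 k).le hlam.le
    have h4 : -⟪y k, A (x (k + 1)) - b⟫ ≤ C * ‖A (x (k + 1)) - b‖ := by
      have hin := abs_real_inner_le_norm (y k) (A (x (k + 1)) - b)
      have h5 : ‖y k‖ * ‖A (x (k + 1)) - b‖ ≤ C * ‖A (x (k + 1)) - b‖ :=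
        mul_le_mul_of_nonneg_right (hC k) (norm_nonneg _)
      have := neg_abs_le ⟪y k, A (x (k + 1)) - b⟫
      linarith
    have h6 : 0 ≤ lam / 2 * ‖A (x (k + 1)) - b‖ ^ 2 := by positivity
    have h7 : lam * (‖A (x (k + 1)) - b‖ ^ 2 / μ ^ 2) / 2 =
        lam / (2 * μ ^ 2) * ‖A (x (k + 1)) - b‖ ^ 2 := by
      ring
    linarith
  -- conclude by lower semicontinuity
  by_contra hcon
  rw [ha] at hcon
  have hlt : (a : EReal) < h xbar := not_le.mp hcon
  obtain ⟨r, har, hrx⟩ := EReal.lt_iff_exists_real_btwn.mp hlt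
  have harR : a < r := by exact_mod_cast har
  have hev1 : ∀ᶠ z in 𝓝 xbar, (r : EReal) < h z := hlsc xbar (r : EReal) hrx
  have hev2 : ∀ᶠ j in atTop, (r : EReal) < h (x (φ j)) := hxφ.eventually hev1
  have hφ1 : Tendsto (fun j => φ j - 1) atTop atTop :=
    (tendsto_sub_atTop_nat 1).comp hφ.tendsto_atTop
  have hev3 : ∀ᶠ j in atTop,
      a + (lam / (2 * μ ^ 2) * ‖A (x (φ j - 1 + 1)) - b‖ ^ 2 +
        C * ‖A (x (φ j - 1 + 1)) - b‖) < r := by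
    have h1 : Tendsto (fun k => a + (lam / (2 * μ ^ 2) * ‖A (x (k + 1)) - b‖ ^ 2 +
        C * ‖A (x (k + 1)) - b‖)) atTop (𝓝 (a + 0)) := by
      have hA1 := (hsq.const_mul (lam / (2 * μ ^ 2))).add (hnorm.const_mul C)
      simp only [mul_zero, add_zero] at hA1
      exact tendsto_const_nhds.add hA1
    rw [add_zero] at h1
    exact (h1.comp hφ1).eventually_lt_const harR
  have hev4 : ∀ᶠ j in atTop, 1 ≤ φ j := hφ.tendsto_atTop.eventually_ge_atTop 1
  obtain ⟨j, h2, h3, h4⟩ := (hev2.and (hev3.and hev4)).exists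
  have heq : φ j - 1 + 1 = φ j := Nat.sub_add_cancel h4
  have h5 : h (x (φ j)) = ((H (φ j - 1) : ℝ) : EReal) := by
    rw [← heq]; exact hH (φ j - 1)
  rw [h5] at h2
  have h2' : r < H (φ j - 1) := by exact_mod_cast h2
  have h8 := hHle (φ j - 1)
  linarith
end
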